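/- arXiv:1909.12123 — 5 statements merged into one kernel-verified Lean document; each statement's English description precedes it below -/
import Mathlib

section
/- (One-parameter K-matrix of types CI and DIII.) Let a, ρ ∈ ℂ, G = Σ_{i=1}^{n}(e_{ii} − e_{n+i,n+i}) ∈ End(ℂ^{2n}), and K(u) = G − (a/(u+ρ/2)) I. Assume either ε = −1 (type CI) with n ≥ 1, or ε = +1 (type DIII) with n ≥ 2. Then: (i) K satisfies the reflection equation R(u−v) K₁(u) R(u+v+ρ) K₂(v) = K₂(v) R(u+v+ρ) K₁(u) R(u−v) on ℂ^{2n} ⊗ ℂ^{2n} over ℂ(u,v); and (ii) K satisfies the symmetry relation K^t(u) = −K(ũ) + ε·(K(u) − K(ũ))/(u − ũ) − (tr K(u))/(u − ũ − κ) · I, where ũ = κ − u − ρ. -/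
set_option maxHeartbeats 8000000


open Matrix
open scoped Kronecker

noncomputable section

def theta (n : ℕ) (ε : ℂ) (i : Fin (2 * n)) : ℂ := if (i : ℕ) < n then ε else 1

def bar {m : ℕ} (i : Fin m) : Fin m := i.rev

def kap (n : ℕ) (ε : ℂ) : ℂ := (n : ℂ) - ε

def Pmat (N : ℕ) : Matrix (Fin N × Fin N) (Fin N × Fin N) ℂ :=
  Matrix.of fun p q => if p.1 = q.2 ∧ p.2 = q.1 then 1 else 0

def Qmat (n : ℕ) (ε : ℂ) :
    Matrix (Fin (2*n) × Fin (2*n)) (Fin (2*n) × Fin (2*n)) ℂ :=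
  Matrix.of fun p q =>
    if p.2 = bar p.1 ∧ q.2 = bar q.1 then theta n ε p.1 * theta n ε q.1 else 0

def Rmat (n : ℕ) (ε : ℂ) (u : ℂ) :
    Matrix (Fin (2*n) × Fin (2*n)) (Fin (2*n) × Fin (2*n)) ℂ :=
  (1 : Matrix (Fin (2*n) × Fin (2*n)) (Fin (2*n) × Fin (2*n)) ℂ)
    - u⁻¹ • Pmat (2*n) + (u - kap n ε)⁻¹ • Qmat n ε

/-- the transposition `t` on `End(ℂ^{2n})`:  `(e_{ij})^t = θ_{ij} e_{j̄ ī}` -/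
def tp (n : ℕ) (ε : ℂ) (M : Matrix (Fin (2*n)) (Fin (2*n)) ℂ) :
    Matrix (Fin (2*n)) (Fin (2*n)) ℂ :=
  Matrix.of fun i j => theta n ε i * theta n ε j * M (bar j) (bar i)

/-- `G = Σ_{i=1}^n (e_{ii} - e_{n+i,n+i})` -/
def Gci (n : ℕ) : Matrix (Fin (2*n)) (Fin (2*n)) ℂ :=
  Matrix.of fun i j => if i = j then (if (i : ℕ) < n then 1 else -1) else 0

/-- `K(u) = G - (a/(u+ρ/2)) I` -/
def Kci (n : ℕ) (a ρ : ℂ) (u : ℂ) : Matrix (Fin (2*n)) (Fin (2*n)) ℂ :=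
  Gci n - (a / (u + ρ/2)) • (1 : Matrix (Fin (2*n)) (Fin (2*n)) ℂ)

/-! ### Auxiliary development -/

namespace Stmt4Aux

variable (n : ℕ) (ε : ℂ)

/-- diagonal entries of `G` -/
def dg (n : ℕ) (i : Fin (2*n)) : ℂ := if (i : ℕ) < n then 1 else -1

/-- the vector whose outer square is `Q` -/
def wv (n : ℕ) (ε : ℂ) (p : Fin (2*n) × Fin (2*n)) : ℂ :=
  if p.2 = bar p.1 then theta n ε p.1 else 0

def g1 (n : ℕ) : Matrix (Fin (2*n) × Fin (2*n)) (Fin (2*n) × Fin (2*n)) ℂ :=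
  Matrix.diagonal fun p => dg n p.1

def g2 (n : ℕ) : Matrix (Fin (2*n) × Fin (2*n)) (Fin (2*n) × Fin (2*n)) ℂ :=
  Matrix.diagonal fun p => dg n p.2

lemma bar_lt {i : Fin (2*n)} : ((bar i : Fin (2*n)) : ℕ) < n ↔ ¬ ((i : ℕ) < n) := by
  have h := i.isLt
  simp only [bar, Fin.val_rev]
  omega

lemma dg_bar (i : Fin (2*n)) : dg n (bar i) = - dg n i := by
  by_cases h : (i : ℕ) < n <;> simp [dg, bar_lt, h]

lemma dg_sq (i : Fin (2*n)) : dg n i * dg n i = 1 := by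
  by_cases h : (i : ℕ) < n <;> simp [dg, h]

variable {ε}

lemma theta_sq (hε : ε * ε = 1) (i : Fin (2*n)) : theta n ε i * theta n ε i = 1 := by
  by_cases h : (i : ℕ) < n <;> simp [theta, h, hε]

lemma theta_bar (hε : ε * ε = 1) (i : Fin (2*n)) :
    theta n ε (bar i) = ε * theta n ε i := by
  by_cases h : (i : ℕ) < n <;> simp [theta, bar_lt, h, hε]

lemma wv_swap (hε : ε * ε = 1) (p : Fin (2*n) × Fin (2*n)) :
    wv n ε p.swap = ε * wv n ε p := by
  unfold wv
  by_cases h : p.2 = bar p.1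
  · rw [if_pos h, if_pos (show p.swap.2 = bar p.swap.1 by
      show p.1 = bar p.2
      rw [h]; exact (Fin.rev_rev _).symm)]
    show theta n ε p.2 = ε * theta n ε p.1
    rw [h]; exact theta_bar n hε p.1
  · rw [if_neg h, if_neg (show ¬ p.swap.2 = bar p.swap.1 by
      intro hh
      exact h (by rw [show p.2 = bar (bar p.2) from (Fin.rev_rev _).symm,
        show (bar p.2 : Fin (2*n)) = p.1 from hh.symm])), mul_zero]

lemma sum_dg : ∑ i : Fin (2*n), dg n i = 0 := by
  have h : ∑ i : Fin (2*n), dg n (Fin.rev i) = ∑ i : Fin (2*n), dg n i :=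
    Fintype.sum_equiv (Fin.revPerm) _ _ (fun i => rfl)
  have h2 : ∑ i : Fin (2*n), dg n (Fin.rev i) = - ∑ i : Fin (2*n), dg n i := by
    rw [← Finset.sum_neg_distrib]
    exact Finset.sum_congr rfl fun i _ => dg_bar n i
  have h3 : (2 : ℂ) * ∑ i : Fin (2*n), dg n i = 0 := by linear_combination h2 - h
  have := mul_eq_zero.mp h3
  simpa using this

lemma sum_wv_sq (hε : ε * ε = 1) :
    ∑ r : Fin (2*n) × Fin (2*n), wv n ε r * wv n ε r = ((2*n : ℕ) : ℂ) := by
  rw [Fintype.sum_prod_type]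
  have hinner : ∀ i : Fin (2*n), ∑ j : Fin (2*n), wv n ε (i, j) * wv n ε (i, j) = 1 := by
    intro i
    rw [Finset.sum_eq_single (bar i)]
    · show (if (bar i : Fin (2*n)) = bar i then theta n ε i else 0) *
        (if (bar i : Fin (2*n)) = bar i then theta n ε i else 0) = 1
      rw [if_pos rfl]; exact theta_sq n hε i
    · intro b _ hb
      show (if b = bar i then theta n ε i else 0) * _ = 0
      rw [if_neg hb, zero_mul]
    · intro h; exact absurd (Finset.mem_univ _) h
  rw [Finset.sum_congr rfl fun i _ => hinner i]
  simp

lemma sum_wv_sq_dg (hε : ε * ε = 1) :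
    ∑ r : Fin (2*n) × Fin (2*n), wv n ε r * wv n ε r * dg n r.1 = 0 := by
  rw [Fintype.sum_prod_type]
  have hinner : ∀ i : Fin (2*n),
      ∑ j : Fin (2*n), wv n ε (i, j) * wv n ε (i, j) * dg n i = dg n i := by
    intro i
    rw [Finset.sum_eq_single (bar i)]
    · show (if (bar i : Fin (2*n)) = bar i then theta n ε i else 0) *
        (if (bar i : Fin (2*n)) = bar i then theta n ε i else 0) * dg n i = dg n i
      rw [if_pos rfl, theta_sq n hε i, one_mul]
    · intro b _ hb
      show (if b = bar i then theta n ε i else 0) * _ * _ = 0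
      rw [if_neg hb, zero_mul, zero_mul]
    · intro h; exact absurd (Finset.mem_univ _) h
  rw [Finset.sum_congr rfl fun i _ => hinner i]
  exact sum_dg n

/-! ### structural matrix lemmas -/

lemma Pmul (M : Matrix (Fin (2*n) × Fin (2*n)) (Fin (2*n) × Fin (2*n)) ℂ) :
    Pmat (2*n) * M = M.submatrix Prod.swap id := by
  ext p q
  rw [Matrix.mul_apply, Finset.sum_eq_single p.swap]
  · have h1 : Pmat (2*n) p p.swap = 1 := by simp [Pmat]
    rw [h1, one_mul]; rfl
  · intro b _ hb
    have hcond : ¬ (p.1 = b.2 ∧ p.2 = b.1) :=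
      fun h => hb (Prod.ext_iff.mpr ⟨h.2.symm, h.1.symm⟩)
    have h0 : Pmat (2*n) p b = 0 := by simp [Pmat, hcond]
    rw [h0, zero_mul]
  · intro h; exact absurd (Finset.mem_univ _) h

lemma mulP (M : Matrix (Fin (2*n) × Fin (2*n)) (Fin (2*n) × Fin (2*n)) ℂ) :
    M * Pmat (2*n) = M.submatrix id Prod.swap := by
  ext p q
  rw [Matrix.mul_apply, Finset.sum_eq_single q.swap]
  · have h1 : Pmat (2*n) q.swap q = 1 := by simp [Pmat]
    rw [h1, mul_one]; rfl
  · intro b _ hb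
    have hcond : ¬ (b.1 = q.2 ∧ b.2 = q.1) :=
      fun h => hb (Prod.ext_iff.mpr ⟨h.1, h.2⟩)
    have h0 : Pmat (2*n) b q = 0 := by simp [Pmat, hcond]
    rw [h0, mul_zero]
  · intro h; exact absurd (Finset.mem_univ _) h

lemma Qeq : Qmat n ε = Matrix.vecMulVec (wv n ε) (wv n ε) := by
  ext p q
  show (if p.2 = bar p.1 ∧ q.2 = bar q.1 then theta n ε p.1 * theta n ε q.1 else 0)
    = wv n ε p * wv n ε q
  unfold wv
  by_cases hA : p.2 = bar p.1 <;> by_cases hB : q.2 = bar q.1 <;> simp [hA, hB]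

lemma SPP : Pmat (2*n) * Pmat (2*n) = 1 := by
  rw [Pmul]
  ext p q
  by_cases h : p = q
  · subst h; simp [Pmat, Matrix.one_apply]
  · have h2 : ¬ (p.2 = q.2 ∧ p.1 = q.1) := fun hh => h (Prod.ext_iff.mpr ⟨hh.2, hh.1⟩)
    simp only [Matrix.submatrix_apply, Matrix.one_apply, if_neg h, Pmat, Matrix.of_apply]
    rw [if_neg (by simpa using h2)]

lemma SPQ (hε : ε * ε = 1) : Pmat (2*n) * Qmat n ε = ε • Qmat n ε := by
  rw [Pmul, Qeq]
  ext p q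
  show wv n ε p.swap * wv n ε q = ε • (wv n ε p * wv n ε q)
  rw [wv_swap n hε p]; simp [mul_assoc]

lemma SQP (hε : ε * ε = 1) : Qmat n ε * Pmat (2*n) = ε • Qmat n ε := by
  rw [mulP, Qeq]
  ext p q
  show wv n ε p * wv n ε q.swap = ε • (wv n ε p * wv n ε q)
  rw [wv_swap n hε q]; simp; ring

lemma SQQ (hε : ε * ε = 1) :
    Qmat n ε * Qmat n ε = ((2*n : ℕ) : ℂ) • Qmat n ε := by
  rw [Qeq]
  ext p q
  rw [Matrix.mul_apply, Matrix.smul_apply]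
  simp only [Matrix.vecMulVec_apply, smul_eq_mul]
  have : ∑ r, wv n ε p * wv n ε r * (wv n ε r * wv n ε q)
      = wv n ε p * wv n ε q * ∑ r, wv n ε r * wv n ε r := by
    rw [Finset.mul_sum]; exact Finset.sum_congr rfl fun r _ => by ring
  rw [this, sum_wv_sq n hε]; ring

lemma Sg1g1 : g1 n * g1 n = 1 := by
  rw [g1, Matrix.diagonal_mul_diagonal]
  have : (fun p : Fin (2*n) × Fin (2*n) => dg n p.1 * dg n p.1) = fun _ => 1 :=
    funext fun p => dg_sq n p.1
  rw [this, Matrix.diagonal_one]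

lemma Sg2g2 : g2 n * g2 n = 1 := by
  rw [g2, Matrix.diagonal_mul_diagonal]
  have : (fun p : Fin (2*n) × Fin (2*n) => dg n p.2 * dg n p.2) = fun _ => 1 :=
    funext fun p => dg_sq n p.2
  rw [this, Matrix.diagonal_one]

lemma Sg2g1 : g2 n * g1 n = g1 n * g2 n := by
  have h : (fun p : Fin (2*n) × Fin (2*n) => dg n p.2 * dg n p.1)
      = (fun p => dg n p.1 * dg n p.2) := funext fun p => mul_comm _ _
  rw [g1, g2, Matrix.diagonal_mul_diagonal, Matrix.diagonal_mul_diagonal, h]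

lemma SPg1 : Pmat (2*n) * g1 n = g2 n * Pmat (2*n) := by
  rw [Pmul, mulP]
  ext p q
  simp only [Matrix.submatrix_apply, g1, g2, Matrix.diagonal_apply, id_eq]
  by_cases h : Prod.swap p = q
  · rw [if_pos h, if_pos (by rw [← h, Prod.swap_swap])]; rfl
  · rw [if_neg h, if_neg (fun hh => h (by rw [hh, Prod.swap_swap]))]

lemma SPg2 : Pmat (2*n) * g2 n = g1 n * Pmat (2*n) := by
  rw [Pmul, mulP]
  ext p q
  simp only [Matrix.submatrix_apply, g1, g2, Matrix.diagonal_apply, id_eq]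
  by_cases h : Prod.swap p = q
  · rw [if_pos h, if_pos (by rw [← h, Prod.swap_swap])]; rfl
  · rw [if_neg h, if_neg (fun hh => h (by rw [hh, Prod.swap_swap]))]

lemma Sg2Q : g2 n * Qmat n ε = -(g1 n * Qmat n ε) := by
  rw [Qeq, g1, g2]
  ext p q
  rw [Matrix.neg_apply, Matrix.diagonal_mul, Matrix.diagonal_mul]
  simp only [Matrix.vecMulVec_apply]
  by_cases h : p.2 = bar p.1
  · rw [show dg n p.2 = - dg n p.1 by rw [h]; exact dg_bar n p.1]; ring
  · rw [show wv n ε p = 0 from if_neg h]; ring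

lemma SQg2 : Qmat n ε * g2 n = -(Qmat n ε * g1 n) := by
  rw [Qeq, g1, g2]
  ext p q
  rw [Matrix.neg_apply, Matrix.mul_diagonal, Matrix.mul_diagonal]
  simp only [Matrix.vecMulVec_apply]
  by_cases h : q.2 = bar q.1
  · rw [show dg n q.2 = - dg n q.1 by rw [h]; exact dg_bar n q.1]; ring
  · rw [show wv n ε q = 0 from if_neg h]; ring

lemma SQg1Q (hε : ε * ε = 1) : Qmat n ε * (g1 n * Qmat n ε) = 0 := by
  rw [← mul_assoc, Qeq, g1]
  ext p q
  rw [Matrix.mul_apply, Matrix.zero_apply]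
  simp only [Matrix.mul_diagonal, Matrix.vecMulVec_apply]
  have : ∑ r, wv n ε p * wv n ε r * dg n r.1 * (wv n ε r * wv n ε q)
      = wv n ε p * wv n ε q * ∑ r, wv n ε r * wv n ε r * dg n r.1 := by
    rw [Finset.mul_sum]; exact Finset.sum_congr rfl fun r _ => by ring
  rw [this, sum_wv_sq_dg n hε]; ring

lemma SQg1P (hε : ε * ε = 1) :
    Qmat n ε * (g1 n * Pmat (2*n)) = -(ε • (Qmat n ε * g1 n)) := by
  rw [← mul_assoc, mulP]
  ext p q
  have hentry : ∀ p' q', (Qmat n ε * g1 n) p' q' = wv n ε p' * wv n ε q' * dg n q'.1 := by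
    intro p' q'
    rw [Qeq, g1, Matrix.mul_diagonal, Matrix.vecMulVec_apply]
  rw [Matrix.submatrix_apply, hentry, Matrix.neg_apply, Matrix.smul_apply, hentry,
    wv_swap n hε q]
  show wv n ε p * (ε * wv n ε q) * dg n q.2 = -(ε • (wv n ε p * wv n ε q * dg n q.1))
  by_cases h : q.2 = bar q.1
  · rw [show dg n q.2 = - dg n q.1 by rw [h]; exact dg_bar n q.1]; simp; ring
  · rw [show wv n ε q = 0 from if_neg h]; simp

lemma SPg1Q (hε : ε * ε = 1) :
    Pmat (2*n) * (g1 n * Qmat n ε) = -(ε • (g1 n * Qmat n ε)) := by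
  rw [Pmul]
  ext p q
  have hentry : ∀ p' q', (g1 n * Qmat n ε) p' q' = dg n p'.1 * (wv n ε p' * wv n ε q') := by
    intro p' q'
    rw [Qeq, g1, Matrix.diagonal_mul, Matrix.vecMulVec_apply]
  rw [Matrix.submatrix_apply, hentry, Matrix.neg_apply, Matrix.smul_apply, hentry,
    wv_swap n hε p]
  show dg n p.2 * (ε * wv n ε p * wv n ε q) = -(ε • (dg n p.1 * (wv n ε p * wv n ε q)))
  by_cases h : p.2 = bar p.1
  · rw [show dg n p.2 = - dg n p.1 by rw [h]; exact dg_bar n p.1]; simp; ring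
  · rw [show wv n ε p = 0 from if_neg h]; simp

lemma SQg1g2 : Qmat n ε * (g1 n * g2 n) = -(Qmat n ε) := by
  rw [← Sg2g1 n, ← mul_assoc, SQg2 n, Matrix.neg_mul, mul_assoc, Sg1g1 n, mul_one]

/-! ### helpers to extend relations by a trailing factor -/

section MulExt
variable {A B C x : Matrix (Fin (2*n) × Fin (2*n)) (Fin (2*n) × Fin (2*n)) ℂ} {c : ℂ}

lemma m1 (h : A * B = C) (x : Matrix (Fin (2*n) × Fin (2*n)) (Fin (2*n) × Fin (2*n)) ℂ) :
    A * (B * x) = C * x := by rw [← mul_assoc, h]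

lemma m2 (h : A * B = c • C) (x : Matrix (Fin (2*n) × Fin (2*n)) (Fin (2*n) × Fin (2*n)) ℂ) :
    A * (B * x) = c • (C * x) := by rw [← mul_assoc, h, Matrix.smul_mul]

lemma m3 (h : A * B = -C) (x : Matrix (Fin (2*n) × Fin (2*n)) (Fin (2*n) × Fin (2*n)) ℂ) :
    A * (B * x) = -(C * x) := by rw [← mul_assoc, h, Matrix.neg_mul]

lemma massoc (A B C x : Matrix (Fin (2*n) × Fin (2*n)) (Fin (2*n) × Fin (2*n)) ℂ) :
    A * (B * (C * x)) = (A * (B * C)) * x := by rw [mul_assoc, mul_assoc]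

lemma m5 (h : A * (B * C) = 0) (x : Matrix (Fin (2*n) × Fin (2*n)) (Fin (2*n) × Fin (2*n)) ℂ) :
    A * (B * (C * x)) = 0 := by
  rw [massoc, h, Matrix.zero_mul]

lemma m8 {D : Matrix (Fin (2*n) × Fin (2*n)) (Fin (2*n) × Fin (2*n)) ℂ}
    (h : A * (B * C) = -D)
    (x : Matrix (Fin (2*n) × Fin (2*n)) (Fin (2*n) × Fin (2*n)) ℂ) :
    A * (B * (C * x)) = -(D * x) := by
  rw [massoc, h, Matrix.neg_mul]

lemma m7 {D : Matrix (Fin (2*n) × Fin (2*n)) (Fin (2*n) × Fin (2*n)) ℂ}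
    (h : A * (B * C) = -(c • D))
    (x : Matrix (Fin (2*n) × Fin (2*n)) (Fin (2*n) × Fin (2*n)) ℂ) :
    A * (B * (C * x)) = -(c • (D * x)) := by
  rw [massoc, h, Matrix.neg_mul, Matrix.smul_mul]

end MulExt

/-! ### Kronecker factorisations of `K ⊗ 1` and `1 ⊗ K` -/

lemma hK1 (a ρ u : ℂ) :
    Kci n a ρ u ⊗ₖ (1 : Matrix (Fin (2*n)) (Fin (2*n)) ℂ)
      = g1 n - (a / (u + ρ/2)) • 1 := by
  ext p q
  rcases p with ⟨p1, p2⟩; rcases q with ⟨q1, q2⟩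
  by_cases h1 : p1 = q1 <;> by_cases h2 : p2 = q2 <;>
    simp [Kci, Gci, g1, dg, Matrix.kroneckerMap_apply, Matrix.one_apply,
      Matrix.diagonal_apply, Prod.ext_iff, h1, h2, Matrix.sub_apply, Matrix.smul_apply,
      sub_mul, smul_eq_mul]

lemma hK2 (a ρ v : ℂ) :
    (1 : Matrix (Fin (2*n)) (Fin (2*n)) ℂ) ⊗ₖ Kci n a ρ v
      = g2 n - (a / (v + ρ/2)) • 1 := by
  ext p q
  rcases p with ⟨p1, p2⟩; rcases q with ⟨q1, q2⟩
  by_cases h1 : p1 = q1 <;> by_cases h2 : p2 = q2 <;>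
    simp [Kci, Gci, g2, dg, Matrix.kroneckerMap_apply, Matrix.one_apply,
      Matrix.diagonal_apply, Prod.ext_iff, h1, h2, Matrix.sub_apply, Matrix.smul_apply,
      mul_sub, smul_eq_mul]

end Stmt4Aux

open Stmt4Aux

theorem statement4 (n : ℕ) (ε : ℂ) (a ρ : ℂ)
    (hcase : (ε = -1 ∧ 1 ≤ n) ∨ (ε = 1 ∧ 2 ≤ n)) :
    -- (i) the reflection equation
    (∀ u v : ℂ, u - v ≠ 0 → u - v - kap n ε ≠ 0 →
        u + v + ρ ≠ 0 → u + v + ρ - kap n ε ≠ 0 →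
        u + ρ/2 ≠ 0 → v + ρ/2 ≠ 0 →
      Rmat n ε (u - v) * (Kci n a ρ u ⊗ₖ (1 : Matrix (Fin (2*n)) (Fin (2*n)) ℂ))
          * Rmat n ε (u + v + ρ) * ((1 : Matrix (Fin (2*n)) (Fin (2*n)) ℂ) ⊗ₖ Kci n a ρ v)
        = ((1 : Matrix (Fin (2*n)) (Fin (2*n)) ℂ) ⊗ₖ Kci n a ρ v) * Rmat n ε (u + v + ρ)
          * (Kci n a ρ u ⊗ₖ (1 : Matrix (Fin (2*n)) (Fin (2*n)) ℂ)) * Rmat n ε (u - v))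
    ∧
    -- (ii) the symmetry relation, with ũ = κ - u - ρ
    (∀ u ut : ℂ, ut = kap n ε - u - ρ →
        u - ut ≠ 0 → u - ut - kap n ε ≠ 0 → u + ρ/2 ≠ 0 → ut + ρ/2 ≠ 0 →
      tp n ε (Kci n a ρ u)
        = -(Kci n a ρ ut) + (ε / (u - ut)) • (Kci n a ρ u - Kci n a ρ ut)
          - ((Kci n a ρ u).trace / (u - ut - kap n ε)) •
              (1 : Matrix (Fin (2*n)) (Fin (2*n)) ℂ)) := by
  have hε : ε * ε = 1 := by rcases hcase with ⟨h, -⟩ | ⟨h, -⟩ <;> subst h <;> norm_num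
  have hED : ε = -1 ∨ ε = 1 := by rcases hcase with ⟨h, -⟩ | ⟨h, -⟩ <;> [left; right] <;> exact h
  constructor
  · intro u v h1 h2 h3 h4 h5 h6
    -- trailing-factor versions of the structural rules
    have t1 := SPP n
    have t1x : ∀ x, Pmat (2*n) * (Pmat (2*n) * x) = x := fun x => by
      rw [m1 n (SPP n), one_mul]
    have t2 := SPQ n hε
    have t2x := fun x => m2 n (SPQ n hε) x
    have t3 := SQP n hε
    have t3x := fun x => m2 n (SQP n hε) x
    have t4 := SQQ n hε
    have t4x := fun x => m2 n (SQQ n hε) x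
    have t5 := Sg1g1 n
    have t5x : ∀ x, g1 n * (g1 n * x) = x := fun x => by
      rw [m1 n (Sg1g1 n), one_mul]
    have t6 := Sg2g2 n
    have t6x : ∀ x, g2 n * (g2 n * x) = x := fun x => by
      rw [m1 n (Sg2g2 n), one_mul]
    have t7 := Sg2g1 n
    have t7x : ∀ x, g2 n * (g1 n * x) = g1 n * (g2 n * x) := fun x => by
      rw [m1 n (Sg2g1 n), mul_assoc]
    have t8 := SPg1 n
    have t8x : ∀ x, Pmat (2*n) * (g1 n * x) = g2 n * (Pmat (2*n) * x) := fun x => by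
      rw [m1 n (SPg1 n), mul_assoc]
    have t9 := SPg2 n
    have t9x : ∀ x, Pmat (2*n) * (g2 n * x) = g1 n * (Pmat (2*n) * x) := fun x => by
      rw [m1 n (SPg2 n), mul_assoc]
    have t10 := Sg2Q n (ε := ε)
    have t10x : ∀ x, g2 n * (Qmat n ε * x) = -(g1 n * (Qmat n ε * x)) := fun x => by
      rw [m3 n (Sg2Q n (ε := ε)), mul_assoc]
    have t11 := SQg2 n (ε := ε)
    have t11x : ∀ x, Qmat n ε * (g2 n * x) = -(Qmat n ε * (g1 n * x)) := fun x => by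
      rw [m3 n (SQg2 n (ε := ε)), mul_assoc]
    have t12 := SQg1Q n hε
    have t12x := fun x => m5 n (SQg1Q n hε) x
    have t13 := SQg1P n hε
    have t13x := fun x => m7 n (SQg1P n hε) x
    have t14 := SPg1Q n hε
    have t14x := fun x => m7 n (SPg1Q n hε) x
    have t15 := SQg1g2 n (ε := ε)
    have t15x := fun x => m8 n (SQg1g2 n (ε := ε)) x
    -- scaled polynomial forms of the factors
    have hw12 : (u - v) * (u - v - kap n ε) ≠ 0 := mul_ne_zero h1 h2
    have hw34 : (u + v + ρ) * (u + v + ρ - kap n ε) ≠ 0 := mul_ne_zero h3 h4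
    have hR1p : Rmat n ε (u - v)
        = ((u-v)*(u-v-kap n ε))⁻¹ •
          (((u-v)*(u-v-kap n ε)) •
              (1 : Matrix (Fin (2*n) × Fin (2*n)) (Fin (2*n) × Fin (2*n)) ℂ)
            - (u-v-kap n ε) • Pmat (2*n) + (u-v) • Qmat n ε) := by
      have e0 : ((u-v)*(u-v-kap n ε))⁻¹ * ((u-v)*(u-v-kap n ε)) = 1 := inv_mul_cancel₀ hw12
      have e1 : ((u-v)*(u-v-kap n ε))⁻¹ * (u-v-kap n ε) = (u-v)⁻¹ := by
        rw [mul_inv, mul_assoc, inv_mul_cancel₀ h2, mul_one]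
      have e2 : ((u-v)*(u-v-kap n ε))⁻¹ * (u-v) = (u-v-kap n ε)⁻¹ := by
        rw [mul_inv, mul_comm (u-v)⁻¹, mul_assoc, inv_mul_cancel₀ h1, mul_one]
      rw [Rmat, smul_add, smul_sub, smul_smul, smul_smul, smul_smul, e0, e1, e2, one_smul]
    have hR2p : Rmat n ε (u + v + ρ)
        = ((u+v+ρ)*(u+v+ρ-kap n ε))⁻¹ •
          (((u+v+ρ)*(u+v+ρ-kap n ε)) •
              (1 : Matrix (Fin (2*n) × Fin (2*n)) (Fin (2*n) × Fin (2*n)) ℂ)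
            - (u+v+ρ-kap n ε) • Pmat (2*n) + (u+v+ρ) • Qmat n ε) := by
      have e0 : ((u+v+ρ)*(u+v+ρ-kap n ε))⁻¹ * ((u+v+ρ)*(u+v+ρ-kap n ε)) = 1 :=
        inv_mul_cancel₀ hw34
      have e1 : ((u+v+ρ)*(u+v+ρ-kap n ε))⁻¹ * (u+v+ρ-kap n ε) = (u+v+ρ)⁻¹ := by
        rw [mul_inv, mul_assoc, inv_mul_cancel₀ h4, mul_one]
      have e2 : ((u+v+ρ)*(u+v+ρ-kap n ε))⁻¹ * (u+v+ρ) = (u+v+ρ-kap n ε)⁻¹ := by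
        rw [mul_inv, mul_comm (u+v+ρ)⁻¹, mul_assoc, inv_mul_cancel₀ h3, mul_one]
      rw [Rmat, smul_add, smul_sub, smul_smul, smul_smul, smul_smul, e0, e1, e2, one_smul]
    have hK1p : Kci n a ρ u ⊗ₖ (1 : Matrix (Fin (2*n)) (Fin (2*n)) ℂ)
        = (u+ρ/2)⁻¹ • ((u+ρ/2) • g1 n
            - a • (1 : Matrix (Fin (2*n) × Fin (2*n)) (Fin (2*n) × Fin (2*n)) ℂ)) := by
      rw [hK1 n a ρ u, smul_sub, smul_smul, inv_mul_cancel₀ h5, one_smul, smul_smul]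
      congr 2
      rw [div_eq_mul_inv, mul_comm]
    have hK2p : (1 : Matrix (Fin (2*n)) (Fin (2*n)) ℂ) ⊗ₖ Kci n a ρ v
        = (v+ρ/2)⁻¹ • ((v+ρ/2) • g2 n
            - a • (1 : Matrix (Fin (2*n) × Fin (2*n)) (Fin (2*n) × Fin (2*n)) ℂ)) := by
      rw [hK2 n a ρ v, smul_sub, smul_smul, inv_mul_cancel₀ h6, one_smul, smul_smul]
      congr 2
      rw [div_eq_mul_inv, mul_comm]
    have hmain :
        (((u-v)*(u-v-kap n ε)) •
              (1 : Matrix (Fin (2*n) × Fin (2*n)) (Fin (2*n) × Fin (2*n)) ℂ)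
            - (u-v-kap n ε) • Pmat (2*n) + (u-v) • Qmat n ε)
          * ((u+ρ/2) • g1 n - a • 1)
          * (((u+v+ρ)*(u+v+ρ-kap n ε)) • 1 - (u+v+ρ-kap n ε) • Pmat (2*n)
              + (u+v+ρ) • Qmat n ε)
          * ((v+ρ/2) • g2 n - a • 1)
        = ((v+ρ/2) • g2 n - a • 1)
          * (((u+v+ρ)*(u+v+ρ-kap n ε)) • 1 - (u+v+ρ-kap n ε) • Pmat (2*n)
              + (u+v+ρ) • Qmat n ε)
          * ((u+ρ/2) • g1 n - a • 1)
          * (((u-v)*(u-v-kap n ε)) • 1 - (u-v-kap n ε) • Pmat (2*n) + (u-v) • Qmat n ε) := by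
      simp only [mul_add, add_mul, mul_sub, sub_mul, mul_assoc, one_mul, mul_one,
        smul_mul_assoc, mul_smul_comm, smul_smul, smul_add, smul_sub, smul_neg, neg_smul,
        neg_mul, mul_neg, neg_neg, mul_zero, zero_mul, smul_zero, add_zero, zero_add,
        sub_zero, zero_sub, neg_zero,
        t1, t1x, t2, t2x, t3, t3x, t4, t4x, t5, t5x, t6, t6x, t7, t7x, t8, t8x,
        t9, t9x, t10, t10x, t11, t11x, t12, t12x, t13, t13x, t14, t14x, t15, t15x]
      simp only [kap]
      rcases hED with hE | hE <;> subst hE <;> match_scalars <;> push_cast <;> ring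
    rw [hR1p, hK1p, hR2p, hK2p]
    simp only [Matrix.smul_mul, Matrix.mul_smul, smul_smul]
    rw [hmain]
    congr 1
    ring
  · intro u ut hut h1 h2 h3 h4
    have hG : (Gci n).trace = 0 := by
      have hd : Matrix.diag (Gci n) = dg n := funext fun i => by simp [Gci, dg, Matrix.diag]
      rw [Matrix.trace, hd]
      exact sum_dg n
    have htr : (Kci n a ρ u).trace = -(((2*n : ℕ) : ℂ) * (a / (u + ρ/2))) := by
      rw [Kci, Matrix.trace_sub, Matrix.trace_smul, Matrix.trace_one, hG]
      simp
      ring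
    rw [htr]
    ext i j
    by_cases hij : i = j
    · subst hij
      subst hut
      rw [kap] at h1 h2 h4
      have hR1 : (u + ρ/2) * (u + ρ/2)⁻¹ = 1 := mul_inv_cancel₀ h3
      have hR2 : ((n:ℂ) - ε - u - ρ + ρ/2) * ((n:ℂ) - ε - u - ρ + ρ/2)⁻¹ = 1 :=
        mul_inv_cancel₀ h4
      have hR3 : (u - ((n:ℂ) - ε - u - ρ)) * (u - ((n:ℂ) - ε - u - ρ))⁻¹ = 1 :=
        mul_inv_cancel₀ h1
      have hR4 : (u - ((n:ℂ) - ε - u - ρ) - ((n:ℂ) - ε))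
          * (u - ((n:ℂ) - ε - u - ρ) - ((n:ℂ) - ε))⁻¹ = 1 := mul_inv_cancel₀ h2
      by_cases hlt : (i : ℕ) < n <;>
        simp only [tp, Kci, Gci, kap, Matrix.of_apply, Matrix.sub_apply, Matrix.smul_apply,
          Matrix.one_apply, Matrix.neg_apply, Matrix.add_apply, smul_eq_mul, if_pos rfl,
          bar_lt, hlt, theta, if_true, if_false, not_true, not_false_iff, ite_true, ite_false,
          mul_one] <;>
        push_cast
      · linear_combination (-1 - a * (u + ρ/2)⁻¹) * hε
          + (ε * a * (u - ((n:ℂ) - ε - u - ρ))⁻¹ * ((n:ℂ) - ε - u - ρ + ρ/2)⁻¹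
              + a * ((n:ℂ) - ε - u - ρ + ρ/2)⁻¹) * hR1
          + (-(ε * a * (u - ((n:ℂ) - ε - u - ρ))⁻¹ * (u + ρ/2)⁻¹)
              + 2 * (n:ℂ) * a * (u + ρ/2)⁻¹ * (u - ((n:ℂ) - ε - u - ρ) - ((n:ℂ) - ε))⁻¹
              + a * (u + ρ/2)⁻¹) * hR2
          + (-(ε * a * (u + ρ/2)⁻¹ * ((n:ℂ) - ε - u - ρ + ρ/2)⁻¹)) * hR3
          + ((n:ℂ) * a * (u + ρ/2)⁻¹ * ((n:ℂ) - ε - u - ρ + ρ/2)⁻¹) * hR4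
      · linear_combination
          (ε * a * (u - ((n:ℂ) - ε - u - ρ))⁻¹ * ((n:ℂ) - ε - u - ρ + ρ/2)⁻¹
              + a * ((n:ℂ) - ε - u - ρ + ρ/2)⁻¹) * hR1
          + (-(ε * a * (u - ((n:ℂ) - ε - u - ρ))⁻¹ * (u + ρ/2)⁻¹)
              + 2 * (n:ℂ) * a * (u + ρ/2)⁻¹ * (u - ((n:ℂ) - ε - u - ρ) - ((n:ℂ) - ε))⁻¹
              + a * (u + ρ/2)⁻¹) * hR2
          + (-(ε * a * (u + ρ/2)⁻¹ * ((n:ℂ) - ε - u - ρ + ρ/2)⁻¹)) * hR3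
          + ((n:ℂ) * a * (u + ρ/2)⁻¹ * ((n:ℂ) - ε - u - ρ + ρ/2)⁻¹) * hR4
    · have hbar : ¬ ((bar j : Fin (2*n)) = bar i) := by
        intro h
        exact hij (Fin.rev_injective h).symm
      simp [tp, Kci, Gci, Matrix.one_apply, hij, hbar, Ne.symm hij]
end
end

section
/- (Six-vertex block decomposition of the Zamolodchikov R-matrix.) Identify ℂ^{2n} with ℂ² ⊗ ℂⁿ via the matrix-unit correspondence 𝚎_{ij} = x_{11}⊗e_{ij}, 𝚎_{n+i,j} = x_{21}⊗e_{ij}, 𝚎_{i,n+j} = x_{12}⊗e_{ij}, 𝚎_{n+i,n+j} = x_{22}⊗e_{ij} (1 ≤ i, j ≤ n), where x_{ab} and e_{ij} are the matrix units of End(ℂ²) and End(ℂⁿ) respectively. Under the induced isomorphism ℂ^{2n} ⊗ ℂ^{2n} ≅ (ℂ² ⊗ ℂ²) ⊗ (ℂⁿ ⊗ ℂⁿ) rearranging tensor factors, the Zamolodchikov R-matrix R̃(u) on ℂ^{2n} ⊗ ℂ^{2n} equals (x_{11}⊗x_{11} + x_{22}⊗x_{22}) ⊗ r(u) + (x_{11}⊗x_{22}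 + x_{22}⊗x_{11}) ⊗ r^t(κ−u) + (x_{12}⊗x_{21} + x_{21}⊗x_{12}) ⊗ U(u), where on ℂⁿ ⊗ ℂⁿ: r(u) = I − P/u, r^t(w) = I − Q/w, U(u) = −P/u + εQ/(u−κ), with P = Σ_{i,j=1}^n e_{ij}⊗e_{ji} and the orthogonal-type Q = Σ_{i,j=1}^n e_{ij}⊗e_{j̄ī} (j̄ = n−j+1). -/
open Matrix
open scoped Kronecker

noncomputable section

/-- the identification `ℂ² ⊗ ℂⁿ ≅ ℂ^{2n}`, `(x, r) ↦ x·n + r` -/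
def merge (n : ℕ) (x : Fin 2) (r : Fin n) : Fin (2*n) :=
  ⟨x.val * n + r.val, by
    have hx : x.val ≤ 1 := Nat.le_of_lt_succ x.isLt
    have hm : x.val * n ≤ 1 * n := Nat.mul_le_mul_right n hx
    have hr := r.isLt
    omega⟩

/-- matrix units of `End(ℂ²)` -/
def xm (a b : Fin 2) : Matrix (Fin 2) (Fin 2) ℂ := Matrix.single a b 1

/-- permutation operator on `ℂⁿ ⊗ ℂⁿ` -/
def Pn (n : ℕ) : Matrix (Fin n × Fin n) (Fin n × Fin n) ℂ :=
  Matrix.of fun p q => if p.1 = q.2 ∧ p.2 = q.1 then 1 else 0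

/-- orthogonal-type `Q` on `ℂⁿ ⊗ ℂⁿ` -/
def Qn (n : ℕ) : Matrix (Fin n × Fin n) (Fin n × Fin n) ℂ :=
  Matrix.of fun p q => if p.2 = bar p.1 ∧ q.2 = bar q.1 then 1 else 0

/-- `r(u) = I - P/u` -/
def rY (n : ℕ) (u : ℂ) : Matrix (Fin n × Fin n) (Fin n × Fin n) ℂ :=
  (1 : Matrix (Fin n × Fin n) (Fin n × Fin n) ℂ) - u⁻¹ • Pn n

/-- `r^t(w) = I - Q/w` -/
def rYt (n : ℕ) (w : ℂ) : Matrix (Fin n × Fin n) (Fin n × Fin n) ℂ :=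
  (1 : Matrix (Fin n × Fin n) (Fin n × Fin n) ℂ) - w⁻¹ • Qn n

/-- `U(u) = -P/u + εQ/(u-κ)` -/
def Uop (n : ℕ) (ε : ℂ) (u : ℂ) : Matrix (Fin n × Fin n) (Fin n × Fin n) ℂ :=
  -(u⁻¹) • Pn n + (ε / (u - kap n ε)) • Qn n

/-- the six-vertex block form of the R-matrix, an operator on `(ℂ²⊗ℂ²) ⊗ (ℂⁿ⊗ℂⁿ)` -/
def sixV (n : ℕ) (ε : ℂ) (u : ℂ) :
    Matrix ((Fin 2 × Fin 2) × (Fin n × Fin n)) ((Fin 2 × Fin 2) × (Fin n × Fin n)) ℂ :=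
  (xm 0 0 ⊗ₖ xm 0 0 + xm 1 1 ⊗ₖ xm 1 1) ⊗ₖ rY n u
    + (xm 0 0 ⊗ₖ xm 1 1 + xm 1 1 ⊗ₖ xm 0 0) ⊗ₖ rYt n (kap n ε - u)
    + (xm 0 1 ⊗ₖ xm 1 0 + xm 1 0 ⊗ₖ xm 0 1) ⊗ₖ Uop n ε u

/-!
Under the rearrangement `mergePair`, the three operators making up `R̃(u)` factor as Kronecker
products: `1 = 1 ⊗ 1`, `P = P₂ ⊗ P` and `Q = Q₂ ⊗ Q`, where `Q₂` is the `θ`-weighted `Q` on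
`ℂ² ⊗ ℂ²`. Sorting `1`, `P₂` and `Q₂` into the diagonal, anti-diagonal and exchange blocks of
matrix units, and using `ε² = 1`, collects the coefficients into `r(u)`, `r^t(κ - u)` and `U(u)`.
-/

lemma one_fin_two_prod :
    (1 : Matrix (Fin 2 × Fin 2) (Fin 2 × Fin 2) ℂ) =
      (xm 0 0 ⊗ₖ xm 0 0 + xm 1 1 ⊗ₖ xm 1 1) + (xm 0 0 ⊗ₖ xm 1 1 + xm 1 1 ⊗ₖ xm 0 0) := by
  ext ⟨x, y⟩ ⟨x', y'⟩
  fin_cases x <;> fin_cases y <;> fin_cases x' <;> fin_cases y' <;> simp [xm, single, one_apply]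

lemma Pn_two :
    Pn 2 = (xm 0 0 ⊗ₖ xm 0 0 + xm 1 1 ⊗ₖ xm 1 1) + (xm 0 1 ⊗ₖ xm 1 0 + xm 1 0 ⊗ₖ xm 0 1) := by
  ext ⟨x, y⟩ ⟨x', y'⟩
  fin_cases x <;> fin_cases y <;> fin_cases x' <;> fin_cases y' <;> simp [xm, single, Pn]

lemma merge_inj {n : ℕ} {x y : Fin 2} {i j : Fin n} :
    merge n x i = merge n y j ↔ x = y ∧ i = j := by
  have hi := i.isLt; have hj := j.isLt
  fin_cases x <;> fin_cases y <;> simp [merge, Fin.ext_iff] <;> omega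

lemma bar_merge (n : ℕ) (x : Fin 2) (i : Fin n) :
    bar (merge n x i) = merge n x.rev (bar i) := by
  have hi := i.isLt
  fin_cases x <;> (apply Fin.ext; simp [bar, merge, Fin.val_rev]; omega)

lemma theta_merge (n : ℕ) (ε : ℂ) (x : Fin 2) (i : Fin n) :
    theta n ε (merge n x i) = if x = 0 then ε else 1 := by
  fin_cases x
  · simp [theta, merge, i.isLt]
  · simp [theta, merge]

def mergePair (n : ℕ) (p : (Fin 2 × Fin 2) × (Fin n × Fin n)) : Fin (2 * n) × Fin (2 * n) :=
  (merge n p.1.1 p.2.1, merge n p.1.2 p.2.2)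

lemma mergePair_injective (n : ℕ) : Function.Injective (mergePair n) := by
  rintro ⟨⟨x, y⟩, i, j⟩ ⟨⟨x', y'⟩, i', j'⟩ h
  simp only [mergePair, Prod.mk.injEq, merge_inj] at h
  aesop

lemma one_submatrix_mergePair (n : ℕ) :
    (1 : Matrix (Fin (2 * n) × Fin (2 * n)) (Fin (2 * n) × Fin (2 * n)) ℂ).submatrix
        (mergePair n) (mergePair n) = 1 ⊗ₖ 1 :=
  (submatrix_one _ (mergePair_injective n)).trans one_kronecker_one.symm

lemma Pmat_submatrix_mergePair (n : ℕ) :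
    (Pmat (2 * n)).submatrix (mergePair n) (mergePair n) = Pn 2 ⊗ₖ Pn n := by
  ext ⟨⟨x, y⟩, i, j⟩ ⟨⟨x', y'⟩, i', j'⟩
  simp only [Pmat, Pn, mergePair, submatrix_apply, kroneckerMap_apply, of_apply, merge_inj,
    ite_zero_mul_ite_zero, one_mul, and_and_and_comm]

lemma Qmat_submatrix_mergePair (n : ℕ) (ε : ℂ) :
    (Qmat n ε).submatrix (mergePair n) (mergePair n) =
      (ε ^ 2 • xm 0 0 ⊗ₖ xm 1 1 + xm 1 1 ⊗ₖ xm 0 0 + ε • (xm 0 1 ⊗ₖ xm 1 0 + xm 1 0 ⊗ₖ xm 0 1))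
        ⊗ₖ Qn n := by
  ext ⟨⟨x, y⟩, i, j⟩ ⟨⟨x', y'⟩, i', j'⟩
  simp only [Qmat, Qn, mergePair, submatrix_apply, kroneckerMap_apply, of_apply, bar_merge,
    merge_inj, theta_merge]
  fin_cases x <;> fin_cases y <;> fin_cases x' <;> fin_cases y' <;>
    simp [xm, single, pow_two]

theorem Rmat_submatrix_mergePair (n : ℕ) {ε : ℂ} (hε : ε ^ 2 = 1) (u : ℂ) :
    (Rmat n ε u).submatrix (mergePair n) (mergePair n) = sixV n ε u := by
  simp only [Rmat, submatrix_add, submatrix_sub, submatrix_smul, Pi.add_apply, Pi.sub_apply,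
    Pi.smul_apply]
  rw [one_submatrix_mergePair, Pmat_submatrix_mergePair, Qmat_submatrix_mergePair, hε, one_smul,
    one_fin_two_prod, Pn_two, sixV, rY, rYt, Uop,
    show kap n ε - u = -(u - kap n ε) by ring, inv_neg]
  generalize xm 0 0 ⊗ₖ xm 0 0 + xm 1 1 ⊗ₖ xm 1 1 = D
  generalize xm 0 0 ⊗ₖ xm 1 1 + xm 1 1 ⊗ₖ xm 0 0 = B
  generalize xm 0 1 ⊗ₖ xm 1 0 + xm 1 0 ⊗ₖ xm 0 1 = C
  ext a b
  simp only [Matrix.add_apply, Matrix.sub_apply, Matrix.smul_apply,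
    kroneckerMap_apply, smul_eq_mul]
  ring

theorem statement6_general (n : ℕ) (ε : ℂ) (hε : ε = 1 ∨ ε = -1)
    (u : ℂ) (x y x' y' : Fin 2) (i j i' j' : Fin n) :
    Rmat n ε u (merge n x i, merge n y j) (merge n x' i', merge n y' j')
      = sixV n ε u ((x, y), (i, j)) ((x', y'), (i', j')) := by
  have hε2 : ε ^ 2 = 1 := by rcases hε with rfl | rfl <;> norm_num
  rw [← Rmat_submatrix_mergePair n hε2 u]
  rfl

theorem statement6 (n : ℕ) (hn : 1 ≤ n) (ε : ℂ) (hε : ε = 1 ∨ ε = -1)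
    (u : ℂ) (h1 : u ≠ 0) (h2 : u - kap n ε ≠ 0) (h3 : kap n ε - u ≠ 0)
    (x y x' y' : Fin 2) (i j i' j' : Fin n) :
    Rmat n ε u (merge n x i, merge n y j) (merge n x' i', merge n y' j')
      = sixV n ε u ((x, y), (i, j)) ((x', y'), (i', j')) :=
  statement6_general n ε hε u x y x' y' i j i' j'
end
end

section
/- (Trace symmetry of the monodromy matrix.) Let S(u) be a 2n×2n matrix with entries in 𝒜 ⊗ ℂ(u) satisfying the compact symmetry relation S^t(u) = −(1 + ε/(u−ũ)) S(ũ) + ε S(u)/(u−ũ) − (tr S(u))/(u−ũ−κ) · I, where ũ = κ − u − ρ, and let A(u) denote the top-left n×n block of S(u). Then −tr S(ũ)/(u − ũ + κ) = tr S(u)/(u − ũ − κ) = (tr A(u) − tr A(ũ))/(u − ũ). -/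
open Matrix
open scoped BigOperators

noncomputable section

/-- the transposition `t`, `(e_{ij})^t = θ_{ij} e_{j̄ ī}`, applied to a matrix with
entries in a `ℂ`-algebra -/
def tpA (n : ℕ) (ε : ℂ) {A : Type*} [Ring A] [Algebra ℂ A]
    (M : Matrix (Fin (2*n)) (Fin (2*n)) A) : Matrix (Fin (2*n)) (Fin (2*n)) A :=
  Matrix.of fun i j => (theta n ε i * theta n ε j) • M (bar j) (bar i)

/-- the embedding `Fin n → Fin (2n)` picking out the top-left `n×n` block -/
def emb (n : ℕ) : Fin n → Fin (2*n) := Fin.castLE (by omega)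


/-!
Apply the symmetry relation at `u` and at `ũ` (note that the tilde of `ũ` is `u`) and take
two `ℂ`-linear functionals of both sides: the trace, which `t` preserves, and the trace of the
top-left block, which `t` sends to `tr S - tr A` because `i ↦ ī` swaps the two diagonal blocks.
This gives four linear relations with scalar coefficients between `tr S(u)`, `tr S(ũ)`,
`tr A(u)`, `tr A(ũ)`, and eliminating gives both identities.
-/

theorem theta_mul_self (n : ℕ) {ε : ℂ} (hε : ε ^ 2 = 1) (i : Fin (2 * n)) :
    theta n ε i * theta n ε i = 1 := by
  unfold theta
  split_ifs
  · rw [← sq, hε]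
  · rw [one_mul]

theorem tpA_apply_self (n : ℕ) {ε : ℂ} (hε : ε ^ 2 = 1) {A : Type*} [Ring A] [Algebra ℂ A]
    (M : Matrix (Fin (2 * n)) (Fin (2 * n)) A) (i : Fin (2 * n)) :
    tpA n ε M i i = M (bar i) (bar i) := by
  rw [tpA, of_apply, theta_mul_self n hε, one_smul]

theorem sum_eq_sum_emb_add_sum_bar_emb (n : ℕ) {M : Type*} [AddCommMonoid M]
    (f : Fin (2 * n) → M) :
    ∑ i, f i = ∑ i : Fin n, f (emb n i) + ∑ i : Fin n, f (bar (emb n i)) := by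
  rw [← (finCongr (two_mul n).symm).sum_comp, Fin.sum_univ_add]
  congr 1
  exact Fintype.sum_equiv Fin.revPerm _ _ fun i => congrArg f <| Fin.ext <| by
    simp only [finCongr_apply, Fin.val_cast, Fin.val_natAdd, bar, emb, Fin.val_rev,
      Fin.val_castLE, Fin.revPerm_apply]
    omega

section
variable (n : ℕ) {ε : ℂ} {A : Type*} [Ring A] [Algebra ℂ A]

theorem trace_tpA (hε : ε ^ 2 = 1) (M : Matrix (Fin (2 * n)) (Fin (2 * n)) A) :
    (tpA n ε M).trace = M.trace := by
  simp only [trace, diag, tpA_apply_self n hε]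
  exact Fintype.sum_equiv Fin.revPerm _ _ fun _ => rfl

theorem trace_submatrix_emb_tpA (hε : ε ^ 2 = 1) (M : Matrix (Fin (2 * n)) (Fin (2 * n)) A) :
    ((tpA n ε M).submatrix (emb n) (emb n)).trace
      = M.trace - (M.submatrix (emb n) (emb n)).trace := by
  simp only [trace, diag, submatrix_apply, tpA_apply_self n hε,
    sum_eq_sum_emb_add_sum_bar_emb n fun i => M i i]
  abel

theorem trace_smul_one {m : Type*} [Fintype m] [DecidableEq m] (c : A) :
    (c • (1 : Matrix m m A)).trace = (Fintype.card m : ℂ) • c := by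
  rw [trace_smul, trace_one, smul_eq_mul, ← nsmul_eq_mul', Nat.cast_smul_eq_nsmul]

theorem emb_injective : Function.Injective (emb n) := Fin.castLE_injective _

variable {M M' : Matrix (Fin (2 * n)) (Fin (2 * n)) A} {c r : ℂ}

theorem trace_eq_of_tpA_eq (hε : ε ^ 2 = 1)
    (h : tpA n ε M = -((1 + c) • M') + c • M - r • (M.trace • (1 : Matrix _ _ A))) :
    M.trace = -((1 + c) • M'.trace) + c • M.trace - r • ((2 * n : ℂ) • M.trace) := by
  have h := congrArg trace h
  rwa [trace_tpA n hε, trace_sub, trace_add, trace_neg, trace_smul, trace_smul, trace_smul,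
    trace_smul_one, Fintype.card_fin, Nat.cast_mul, Nat.cast_ofNat] at h

theorem trace_sub_trace_submatrix_emb_eq_of_tpA_eq (hε : ε ^ 2 = 1)
    (h : tpA n ε M = -((1 + c) • M') + c • M - r • (M.trace • (1 : Matrix _ _ A))) :
    M.trace - (M.submatrix (emb n) (emb n)).trace
      = -((1 + c) • (M'.submatrix (emb n) (emb n)).trace)
        + c • (M.submatrix (emb n) (emb n)).trace - r • ((n : ℂ) • M.trace) := by
  have h := congrArg (fun X => (X.submatrix (emb n) (emb n)).trace) h
  simp only [trace_submatrix_emb_tpA n hε, submatrix_sub, submatrix_add, submatrix_neg,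
    submatrix_smul, Pi.sub_apply, Pi.add_apply, Pi.neg_apply, Pi.smul_apply,
    submatrix_one _ (emb_injective n)] at h
  rwa [trace_sub, trace_add, trace_neg, trace_smul, trace_smul, trace_smul, trace_smul_one,
    Fintype.card_fin] at h

end

section
variable {V : Type*} [AddCommGroup V] [Module ℂ V] {ε m k u ut : ℂ} {T T' a a' : V}

theorem neg_inv_smul_eq_inv_smul_of_trace_relations (hk : k = m - ε) (hε : ε ≠ 0)
    (hu : u - ut ≠ 0) (hk₁ : u - ut - k ≠ 0) (hk₂ : u - ut + k ≠ 0)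
    (hT : T = -((1 + ε / (u - ut)) • T') + (ε / (u - ut)) • T
      - (1 / (u - ut - k)) • ((2 * m) • T))
    (hT' : T' = -((1 + ε / (ut - u)) • T) + (ε / (ut - u)) • T'
      - (1 / (ut - u - k)) • ((2 * m) • T')) :
    -((1 / (u - ut + k)) • T') = (1 / (u - ut - k)) • T := by
  have hu' : ut - u ≠ 0 := sub_ne_zero.2 (sub_ne_zero.1 hu).symm
  have hk₃ : ut - u - k ≠ 0 := fun h => hk₂ (by linear_combination -h)
  subst hk
  -- Up to nonzero factors the two relations say `(u - ut + ε) • X = 0` and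
  -- `(u - ut - ε) • X = 0` with `X = (u - ut + k) • T + (u - ut - k) • T'`.
  linear_combination (norm := skip)
    (-(u - ut) / (2 * ε * (u - ut + (m - ε)))) • hT
      + ((u - ut) / (2 * ε * (u - ut - (m - ε)))) • hT'
  match_scalars <;> field_simp <;> ring

theorem inv_smul_eq_inv_smul_sub_of_block_relations (hk : k = m - ε) (hε : ε ≠ 0)
    (hu : u - ut ≠ 0) (hk₁ : u - ut - k ≠ 0) (hk₂ : u - ut + k ≠ 0)
    (hTT' : -((1 / (u - ut + k)) • T') = (1 / (u - ut - k)) • T)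
    (ha : T - a = -((1 + ε / (u - ut)) • a') + (ε / (u - ut)) • a
      - (1 / (u - ut - k)) • (m • T))
    (ha' : T' - a' = -((1 + ε / (ut - u)) • a) + (ε / (ut - u)) • a'
      - (1 / (ut - u - k)) • (m • T')) :
    (1 / (u - ut - k)) • T = (1 / (u - ut)) • (a - a') := by
  have hu' : ut - u ≠ 0 := sub_ne_zero.2 (sub_ne_zero.1 hu).symm
  have hk₃ : ut - u - k ≠ 0 := fun h => hk₂ (by linear_combination -h)
  subst hk
  linear_combination (norm := skip)
    (1 / (2 * ε)) • ha + (1 / (2 * ε)) • ha' + ((u - ut - ε) / (2 * ε)) • hTT'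
  match_scalars <;> field_simp <;> ring

end

theorem statement10_general (n : ℕ) (ε ρ : ℂ) (hε : ε = 1 ∨ ε = -1)
    {A : Type*} [Ring A] [Algebra ℂ A]
    (S : ℂ → Matrix (Fin (2*n)) (Fin (2*n)) A)
    -- the compact symmetry relation, with ũ = κ - u - ρ
    (hsym : ∀ u ut : ℂ, ut = kap n ε - u - ρ → u - ut ≠ 0 → u - ut - kap n ε ≠ 0 →
      tpA n ε (S u)
        = -((1 + ε / (u - ut)) • S ut) + (ε / (u - ut)) • S u
          - (1 / (u - ut - kap n ε)) •
              ((S u).trace • (1 : Matrix (Fin (2*n)) (Fin (2*n)) A)))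
    (u ut : ℂ) (hut : ut = kap n ε - u - ρ)
    (h1 : u - ut ≠ 0) (h2 : u - ut - kap n ε ≠ 0) (h3 : u - ut + kap n ε ≠ 0) :
    -((1 / (u - ut + kap n ε)) • (S ut).trace) = (1 / (u - ut - kap n ε)) • (S u).trace
    ∧ (1 / (u - ut - kap n ε)) • (S u).trace
        = (1 / (u - ut)) •
            ((∑ i : Fin n, S u (emb n i) (emb n i)) - ∑ i : Fin n, S ut (emb n i) (emb n i)) := by
  have hε2 : ε ^ 2 = 1 := by rcases hε with rfl | rfl <;> norm_num
  have hε0 : ε ≠ 0 := by rintro rfl; norm_num at hε2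
  have hk : kap n ε = n - ε := rfl
  have hsym_u := hsym u ut hut h1 h2
  have hsym_ut := hsym ut u (by rw [hut]; ring) (fun h => h1 (by linear_combination -h))
    (fun h => h3 (by linear_combination -h))
  have htrace := neg_inv_smul_eq_inv_smul_of_trace_relations hk hε0 h1 h2 h3
    (trace_eq_of_tpA_eq n hε2 hsym_u) (trace_eq_of_tpA_eq n hε2 hsym_ut)
  exact ⟨htrace, inv_smul_eq_inv_smul_sub_of_block_relations hk hε0 h1 h2 h3 htrace
    (trace_sub_trace_submatrix_emb_eq_of_tpA_eq n hε2 hsym_u)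
    (trace_sub_trace_submatrix_emb_eq_of_tpA_eq n hε2 hsym_ut)⟩

theorem statement10 (n : ℕ) (hn : 1 ≤ n) (ε ρ : ℂ) (hε : ε = 1 ∨ ε = -1)
    {A : Type*} [Ring A] [Algebra ℂ A]
    (S : ℂ → Matrix (Fin (2*n)) (Fin (2*n)) A)
    -- the compact symmetry relation, with ũ = κ - u - ρ
    (hsym : ∀ u ut : ℂ, ut = kap n ε - u - ρ → u - ut ≠ 0 → u - ut - kap n ε ≠ 0 →
      tpA n ε (S u)
        = -((1 + ε / (u - ut)) • S ut) + (ε / (u - ut)) • S u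
          - (1 / (u - ut - kap n ε)) •
              ((S u).trace • (1 : Matrix (Fin (2*n)) (Fin (2*n)) A)))
    (u ut : ℂ) (hut : ut = kap n ε - u - ρ)
    (h1 : u - ut ≠ 0) (h2 : u - ut - kap n ε ≠ 0) (h3 : u - ut + kap n ε ≠ 0) :
    -((1 / (u - ut + kap n ε)) • (S ut).trace) = (1 / (u - ut - kap n ε)) • (S u).trace
    ∧ (1 / (u - ut - kap n ε)) • (S u).trace
        = (1 / (u - ut)) •
            ((∑ i : Fin n, S u (emb n i) (emb n i)) - ∑ i : Fin n, S ut (emb n i) (emb n i)) :=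
  statement10_general n ε ρ hε S hsym u ut hut h1 h2 h3
end
end

section
/- (Dressing of a matrix operator by normalized Yang R-matrices on the vacuum.) Let d ≥ 2, m ≥ 1, and let Ṙ(u) = (u/(u−1))(I − P/u) be the normalized Yang R-matrix on ℂ^d ⊗ ℂ^d, with P the permutation operator. Let A(v) be a d×d matrix with entries in 𝒜 ⊗ ℂ(v, u₁, …, u_m, ρ) whose first column vanishes below the (1,1) entry: [A(v)]_{1+i,1} = 0 for 1 ≤ i ≤ d−1. On V_a ⊗ W, where V_a ≅ ℂ^d and W = V_{b₁} ⊗ ⋯ ⊗ V_{b_m} with each V_{b_i} ≅ ℂ^d, set A_{ab}(v; u) := ( ∏_{i=1}^{m} Ṙ_{a b_i}(v + u_i + ρ) ) A_a(v) ( ∏_{i=m}^{1} Ṙ_{a b_i}(v − u_i) ), with A_a acting as A(v) on V_a and as the identity on W, and the products ordered as indicated. Let ξ = e₁^{⊗m} ∈ W and Λ⁻(v) = ∏_{i=1}^m ((v+u_i−1+ρ)(v−u_i−1))/((v+u_i+ρ)(v−u_i)). Then, regarding the matrix entries of A_{ab}(v;u) as operators on W with coefficients in 𝒜 ⊗ ℂ(v,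 u₁,…,u_m, ρ): [A_{ab}(v;u)]_{11} ξ = [A(v)]_{11} ξ; [A_{ab}(v;u)]_{1+i,1} ξ = 0; and [A_{ab}(v;u)]_{1+i,1+j} ξ = (1/Λ⁻(v)) · ( [A(v)]_{1+i,1+j} + δ_{ij} ((1 − Λ⁻(v))/(2v−1+ρ)) [A(v)]_{11} ) ξ, for all 1 ≤ i, j ≤ d−1. -/
open Matrix
open scoped BigOperators

noncomputable section

section Defs

variable (d m : ℕ) {A : Type*} [Ring A] [Algebra ℂ A]

/-- permutation operator `P` on `ℂ^d ⊗ ℂ^d` -/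
def PdA : Matrix (Fin d × Fin d) (Fin d × Fin d) A :=
  Matrix.of fun p q => if p.1 = q.2 ∧ p.2 = q.1 then 1 else 0

/-- the normalized Yang R-matrix `Ṙ(w) = (w/(w-1))(I - P/w)` -/
def RnormA (w : ℂ) : Matrix (Fin d × Fin d) (Fin d × Fin d) A :=
  (w / (w - 1)) • ((1 : Matrix (Fin d × Fin d) (Fin d × Fin d) A) - w⁻¹ • PdA d)

/-- single-site operator `A_a` on `V_a ⊗ W` -/
def onAW (M : Matrix (Fin d) (Fin d) A) :
    Matrix (Fin d × (Fin m → Fin d)) (Fin d × (Fin m → Fin d)) A :=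
  Matrix.of fun p q => M p.1 q.1 * (if p.2 = q.2 then 1 else 0)

/-- two-site operator acting on the factors `(a, b_i)` of `V_a ⊗ W` -/
def onRW (i : Fin m) (M : Matrix (Fin d × Fin d) (Fin d × Fin d) A) :
    Matrix (Fin d × (Fin m → Fin d)) (Fin d × (Fin m → Fin d)) A :=
  Matrix.of fun p q =>
    M (p.1, p.2 i) (q.1, q.2 i) * (if ∀ j, j ≠ i → p.2 j = q.2 j then 1 else 0)

/-- the dressed matrix
`A_{ab}(v;u) = (∏ᵢ Ṙ_{a bᵢ}(v+uᵢ+ρ)) A_a(v) (∏ᵢ (reversed) Ṙ_{a bᵢ}(v-uᵢ))` -/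
def dressed (ρ : ℂ) (Am : ℂ → Matrix (Fin d) (Fin d) A) (v : ℂ) (u : Fin m → ℂ) :
    Matrix (Fin d × (Fin m → Fin d)) (Fin d × (Fin m → Fin d)) A :=
  ((List.finRange m).map fun i => onRW d m i (RnormA d (v + u i + ρ))).prod *
  onAW d m (Am v) *
  ((List.finRange m).reverse.map fun i => onRW d m i (RnormA d (v - u i))).prod

/-- the `(k,l)` entry of the dressed matrix, regarded as an operator on `W` -/
def entryOp (ρ : ℂ) (Am : ℂ → Matrix (Fin d) (Fin d) A) (v : ℂ) (u : Fin m → ℂ)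
    (k l : Fin d) : Matrix (Fin m → Fin d) (Fin m → Fin d) A :=
  Matrix.of fun p q => dressed d m ρ Am v u (k, p) (l, q)

end Defs

/-!
Since `Ṙ(w) = (w/(w-1)) (1 - w⁻¹ P)`, the factor `Ṙ_{a b_i}` only exchanges the auxiliary index
with the index at site `b_i`. Hence it preserves the number of indices different from `e₁`,
which `A_a` cannot increase because the first column of `A(v)` vanishes below the diagonal;
and it never changes the index at a site `b_k`, `k ≠ i`. The first fact kills every entry
outside the vacuum and one-excitation sectors. Peeling off the outermost pair
`Ṙ_{a b_i}(v + u_i + ρ) ⋯ Ṙ_{a b_i}(v - u_i)`, the second fact turns the one-excitation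
entries into a first-order linear recursion, whose inhomogeneous terms telescope because
`(v + u_i + ρ) + (v - u_i) - 1 = 2v - 1 + ρ` does not depend on `i`.
-/

namespace YangDressing

variable {d m : ℕ} {A : Type*} [Ring A]

def swapAt (a : Fin m) : Equiv.Perm (Fin d × (Fin m → Fin d)) :=
  Function.Involutive.toPerm (fun x => (x.2 a, Function.update x.2 a x.1)) fun x => by simp

@[simp]
lemma swapAt_apply (a : Fin m) (x : Fin d × (Fin m → Fin d)) :
    swapAt a x = (x.2 a, Function.update x.2 a x.1) := rfl

@[simp]
lemma swapAt_symm (a : Fin m) : (swapAt (d := d) a).symm = swapAt a :=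
  Function.Involutive.toPerm_symm _

lemma onRW_one (a : Fin m) : onRW d m a (1 : Matrix (Fin d × Fin d) (Fin d × Fin d) A) = 1 := by
  ext p q
  simp only [onRW, of_apply, one_apply, Prod.ext_iff, funext_iff, ite_zero_mul_ite_zero, one_mul]
  exact if_congr (by grind) rfl rfl

lemma onRW_PdA (a : Fin m) : onRW d m a (PdA d) = (swapAt a).permMatrix A := by
  ext p q
  simp only [onRW, PdA, of_apply, Equiv.Perm.permMatrix, PEquiv.toMatrix_apply,
    Equiv.toPEquiv_apply, Option.mem_def, Option.some.injEq, swapAt_apply, Prod.ext_iff,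
    Function.update_eq_iff, ite_zero_mul_ite_zero, one_mul]
  exact if_congr (by grind) rfl rfl

lemma onRW_sub (a : Fin m) (N N' : Matrix (Fin d × Fin d) (Fin d × Fin d) A) :
    onRW d m a (N - N') = onRW d m a N - onRW d m a N' := by
  ext p q
  simp only [onRW, of_apply, Matrix.sub_apply, sub_mul]

lemma onRW_smul [Algebra ℂ A] (a : Fin m) (c : ℂ) (N : Matrix (Fin d × Fin d) (Fin d × Fin d) A) :
    onRW d m a (c • N) = c • onRW d m a N := by
  ext p q
  simp only [onRW, of_apply, Matrix.smul_apply, smul_mul_assoc]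

lemma onRW_RnormA [Algebra ℂ A] (a : Fin m) (w : ℂ) :
    onRW d m a (RnormA d w) = (w / (w - 1)) • (1 - w⁻¹ • (swapAt a).permMatrix A) := by
  rw [RnormA, onRW_smul, onRW_sub, onRW_smul, onRW_one, onRW_PdA]

lemma conj_permMatrix_apply {n A : Type*} [Fintype n] [DecidableEq n] [Ring A] [Algebra ℂ A]
    (σ : Equiv.Perm n) (c c' e e' : ℂ) (D : Matrix n n A) (x y : n) :
    ((c' • (1 - e' • σ.permMatrix A)) * D * (c • (1 - e • σ.permMatrix A))) x y =
      (c' * c) • (D x y - e • D x (σ.symm y) - e' • D (σ x) y + (e' * e) • D (σ x) (σ.symm y)) := by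
  simp only [Matrix.smul_mul, Matrix.mul_smul, sub_mul, mul_sub, one_mul, mul_one,
    PEquiv.toMatrix_toPEquiv_mul, PEquiv.mul_toMatrix_toPEquiv, Equiv.Perm.permMatrix,
    Matrix.smul_apply, Matrix.sub_apply, submatrix_apply, id]
  module

lemma blockTriangular_permMatrix {n α R : Type*} [DecidableEq n] [Preorder α] [Zero R] [One R]
    (σ : Equiv.Perm n) {b : n → α} (hb : ∀ x, b (σ x) = b x) :
    (σ.permMatrix R).BlockTriangular b := by
  intro x y hlt
  simp only [Equiv.Perm.permMatrix, PEquiv.toMatrix_apply, Equiv.toPEquiv_apply, Option.mem_def,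
    Option.some.injEq]
  rw [if_neg]
  rintro rfl
  exact hlt.ne (hb x)

lemma blockTriangular_onRW_site {α : Type*} [Preorder α] (b : Fin d → α) {a c : Fin m}
    (hac : a ≠ c) (N : Matrix (Fin d × Fin d) (Fin d × Fin d) A) :
    (onRW d m a N).BlockTriangular fun x => b (x.2 c) := by
  intro p q hlt
  rw [onRW, of_apply, if_neg, mul_zero]
  exact fun h => hlt.ne (congrArg b (h c hac.symm).symm)

lemma blockTriangular_onAW {α : Type*} [Preorder α] (b : (Fin m → Fin d) → α)
    (M : Matrix (Fin d) (Fin d) A) :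
    (onAW d m M).BlockTriangular fun x => b x.2 := by
  intro p q hlt
  rw [onAW, of_apply, if_neg, mul_zero]
  exact fun h => hlt.ne (congrArg b h.symm)

/-- `none` stands for the auxiliary space `V_a` and `some i` for the site `b_i`. -/
def excitations (z : Fin d) (x : Fin d × (Fin m → Fin d)) : ℕ :=
  ∑ o : Option (Fin m), if o.elim x.1 x.2 = z then 0 else 1

lemma excitations_eq (z : Fin d) (x : Fin d × (Fin m → Fin d)) :
    excitations z x = (if x.1 = z then 0 else 1) + ∑ a, if x.2 a = z then 0 else 1 :=
  Fintype.sum_option _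

lemma excitations_swapAt (z : Fin d) (a : Fin m) (x : Fin d × (Fin m → Fin d)) :
    excitations z (swapAt a x) = excitations z x := by
  rw [excitations, ← Equiv.sum_comp (Equiv.swap none (some a))]
  refine Fintype.sum_congr _ _ fun o => ?_
  congr 1
  rcases o with _ | b
  · simp
  · by_cases hb : b = a
    · simp [hb]
    · simp [hb, Equiv.swap_apply_of_ne_of_ne]

lemma excitations_eq_zero_iff {z : Fin d} {x : Fin d × (Fin m → Fin d)} :
    excitations z x = 0 ↔ x = (z, fun _ => z) := by
  simp [excitations_eq, Finset.sum_eq_zero_iff, Prod.ext_iff, funext_iff]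

lemma excitations_vacuum_lt {z : Fin d} {x : Fin d × (Fin m → Fin d)}
    (hx : x ≠ (z, fun _ => z)) : excitations z (z, fun _ : Fin m => z) < excitations z x := by
  rw [excitations_eq_zero_iff.mpr rfl]
  exact Nat.pos_of_ne_zero (excitations_eq_zero_iff.not.mpr hx)

lemma excitations_single_lt {z i j : Fin d} {p : Fin m → Fin d} (hi : i ≠ z)
    (hp : p ≠ fun _ => z) : excitations z (j, fun _ : Fin m => z) < excitations z (i, p) := by
  obtain ⟨a, ha⟩ : ∃ a, p a ≠ z := by
    by_contra! h
    exact hp (funext h)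
  have hsum : 1 ≤ ∑ b, if p b = z then 0 else 1 :=
    calc 1 = if p a = z then 0 else 1 := by rw [if_neg ha]
      _ ≤ _ := Finset.single_le_sum (f := fun b => if p b = z then 0 else 1)
        (fun _ _ => Nat.zero_le _) (Finset.mem_univ a)
  rw [excitations_eq, excitations_eq]
  simp only [if_neg hi, if_true, Finset.sum_const_zero]
  split_ifs <;> omega

lemma blockTriangular_onAW_excitations {z : Fin d} {M : Matrix (Fin d) (Fin d) A}
    (hM : ∀ i, i ≠ z → M i z = 0) : (onAW d m M).BlockTriangular (excitations z) := by
  intro p q hlt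
  rw [onAW, of_apply]
  split_ifs with h
  · rw [excitations_eq, excitations_eq, h] at hlt
    obtain ⟨hq, hp⟩ : q.1 = z ∧ p.1 ≠ z := by grind
    rw [hq, hM _ hp, zero_mul]
  · rw [mul_zero]

lemma div_sub_one_mul_one_sub_inv {K : Type*} [Field K] {t : K} (ht0 : t ≠ 0) (ht1 : t - 1 ≠ 0) :
    t / (t - 1) * (1 - t⁻¹) = 1 := by
  field_simp

lemma div_sub_one_mul_div_sub_one_mul_inv {K : Type*} [Field K] {t t' : K} (ht0 : t ≠ 0)
    (ht1 : t - 1 ≠ 0) (ht0' : t' ≠ 0) (ht1' : t' - 1 ≠ 0) (hκ : t + t' - 1 ≠ 0) :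
    t' / (t' - 1) * (t / (t - 1)) * (t'⁻¹ * t⁻¹) =
      (t / (t - 1) * (t' / (t' - 1)) - 1) / (t + t' - 1) := by
  rw [eq_div_iff hκ]
  field_simp
  ring

variable [Algebra ℂ A]

lemma blockTriangular_onRW_RnormA_excitations (z : Fin d) (a : Fin m) (w : ℂ) :
    (onRW d m a (RnormA d w : Matrix _ _ A)).BlockTriangular (excitations z) := by
  have hP : (swapAt a).permMatrix A ∈ blockTriangularSubalgebra ℂ A (excitations z) :=
    blockTriangular_permMatrix (swapAt a) (excitations_swapAt z a)
  rw [onRW_RnormA]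
  exact Subalgebra.smul_mem _ (sub_mem (one_mem _) (Subalgebra.smul_mem _ hP _)) _

def dressedAlong (w w' : Fin m → ℂ) (M : Matrix (Fin d) (Fin d) A) (l : List (Fin m)) :
    Matrix (Fin d × (Fin m → Fin d)) (Fin d × (Fin m → Fin d)) A :=
  (l.map fun a => onRW d m a (RnormA d (w' a))).prod * onAW d m M *
    (l.reverse.map fun a => onRW d m a (RnormA d (w a))).prod

section dressedAlong

variable (w w' : Fin m → ℂ) (M : Matrix (Fin d) (Fin d) A)

lemma dressedAlong_nil : dressedAlong w w' M [] = onAW d m M := by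
  simp [dressedAlong]

lemma dressedAlong_cons (a : Fin m) (l : List (Fin m)) :
    dressedAlong w w' M (a :: l) =
      onRW d m a (RnormA d (w' a)) * dressedAlong w w' M l * onRW d m a (RnormA d (w a)) := by
  simp [dressedAlong, mul_assoc]

lemma blockTriangular_dressedAlong {α : Type*} [LinearOrder α]
    {b : Fin d × (Fin m → Fin d) → α} {l : List (Fin m)}
    (hR : ∀ a ∈ l, ∀ w : ℂ, (onRW d m a (RnormA d w : Matrix _ _ A)).BlockTriangular b)
    (hM : (onAW d m M).BlockTriangular b) :
    (dressedAlong w w' M l).BlockTriangular b := by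
  let S := blockTriangularSubalgebra ℂ A b
  have hprod : ∀ w : Fin m → ℂ, ∀ l' : List (Fin m), (∀ a ∈ l', a ∈ l) →
      (l'.map fun a => onRW d m a (RnormA d (w a))).prod ∈ S := fun w l' hl' =>
    Subalgebra.list_prod_mem _ (by simpa [S] using fun a ha => hR a (hl' a ha) (w a))
  exact S.mul_mem (S.mul_mem (hprod w' l fun _ => id) hM)
    (hprod w l.reverse fun _ => List.mem_reverse.mp)

lemma dressedAlong_apply_eq_zero_of_excitations_lt (l : List (Fin m)) {z : Fin d}
    (hM : ∀ i, i ≠ z → M i z = 0)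
    {x y : Fin d × (Fin m → Fin d)} (h : excitations z y < excitations z x) :
    dressedAlong w w' M l x y = 0 :=
  blockTriangular_dressedAlong w w' M
    (fun a _ w => blockTriangular_onRW_RnormA_excitations z a w)
    (blockTriangular_onAW_excitations hM) h

lemma dressedAlong_apply_eq_zero_of_site_ne {l : List (Fin m)} {c : Fin m} (hc : c ∉ l)
    {x y : Fin d × (Fin m → Fin d)} (hxy : x.2 c ≠ y.2 c) : dressedAlong w w' M l x y = 0 := by
  have key {α : Type} [LinearOrder α] (b : Fin d → α) :
      (dressedAlong w w' M l).BlockTriangular fun x => b (x.2 c) :=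
    blockTriangular_dressedAlong w w' M
      (fun a ha w => blockTriangular_onRW_site b (ne_of_mem_of_not_mem ha hc) (RnormA d w))
      (blockTriangular_onAW (fun f => b (f c)) M)
  rcases hxy.lt_or_gt with hlt | hlt
  · exact key OrderDual.toDual hlt
  · exact key id hlt

lemma dressedAlong_apply_self {l : List (Fin m)} (hw : ∀ a ∈ l, w a ≠ 0 ∧ w a - 1 ≠ 0)
    (hw' : ∀ a ∈ l, w' a ≠ 0 ∧ w' a - 1 ≠ 0) {x : Fin d × (Fin m → Fin d)}
    (hx : ∀ a ∈ l, swapAt a x = x) : dressedAlong w w' M l x x = onAW d m M x x := by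
  induction l with
  | nil => rw [dressedAlong_nil]
  | cons a l ih =>
    simp only [List.mem_cons, forall_eq_or_imp] at hw hw' hx
    rw [dressedAlong_cons, onRW_RnormA, onRW_RnormA, conj_permMatrix_apply, swapAt_symm, hx.1,
      ih hw.2 hw'.2 hx.2]
    calc _ = (w' a / (w' a - 1) * (1 - (w' a)⁻¹) * (w a / (w a - 1) * (1 - (w a)⁻¹))) •
          onAW d m M x x := by module
      _ = _ := by
        rw [div_sub_one_mul_one_sub_inv hw.1.1 hw.1.2, div_sub_one_mul_one_sub_inv hw'.1.1 hw'.1.2,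
          one_mul, one_smul]

lemma dressedAlong_apply_single {l : List (Fin m)} (hl : l.Nodup)
    (hw : ∀ a ∈ l, w a ≠ 0 ∧ w a - 1 ≠ 0) (hw' : ∀ a ∈ l, w' a ≠ 0 ∧ w' a - 1 ≠ 0)
    {κ : ℂ} (hκ : ∀ a ∈ l, w a + w' a - 1 = κ) (hκ0 : κ ≠ 0) {z i j : Fin d}
    (hi : i ≠ z) (hj : j ≠ z) :
    dressedAlong w w' M l (i, fun _ => z) (j, fun _ => z) =
      (l.map fun a => w a / (w a - 1) * (w' a / (w' a - 1))).prod • M i j +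
        (if i = j then ((l.map fun a => w a / (w a - 1) * (w' a / (w' a - 1))).prod - 1) / κ
          else 0) • M z z := by
  induction l with
  | nil => simp [dressedAlong_nil, onAW]
  | cons a l ih =>
    obtain ⟨ha, hl⟩ := List.nodup_cons.mp hl
    simp only [List.mem_cons, forall_eq_or_imp] at hw hw' hκ
    have hsite (k : Fin d) (hk : k ≠ z) (x : Fin d × (Fin m → Fin d)) (hx : x.2 a = z) :
        dressedAlong w w' M l x (swapAt a (k, fun _ => z)) = 0 ∧
          dressedAlong w w' M l (swapAt a (k, fun _ => z)) x = 0 :=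
      ⟨dressedAlong_apply_eq_zero_of_site_ne w w' M ha (by simp [hx, hk.symm]),
        dressedAlong_apply_eq_zero_of_site_ne w w' M ha (by simp [hx, hk])⟩
    have hswap : dressedAlong w w' M l (swapAt a (i, fun _ => z)) (swapAt a (j, fun _ => z)) =
        if i = j then M z z else 0 := by
      split_ifs with hij
      · subst hij
        rw [dressedAlong_apply_self w w' M hw.2 hw'.2]
        · simp [onAW]
        · intro b hb
          simp [ne_of_mem_of_not_mem hb ha, Function.update_eq_self_iff]
      · exact dressedAlong_apply_eq_zero_of_site_ne w w' M ha (by simpa using hij)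
    rw [dressedAlong_cons, onRW_RnormA, onRW_RnormA, conj_permMatrix_apply, swapAt_symm,
      (hsite j hj _ rfl).1, (hsite i hi _ rfl).2, hswap, ih hl hw.2 hw'.2 hκ.2]
    have hscalar := div_sub_one_mul_div_sub_one_mul_inv hw.1.1 hw.1.2 hw'.1.1 hw'.1.2
      (hκ.1 ▸ hκ0)
    rw [hκ.1] at hscalar
    simp only [List.map_cons, List.prod_cons]
    split_ifs
    · match_scalars
      · ring
      · rw [mul_one, mul_one, mul_one, mul_add, hscalar]
        ring
    · match_scalars <;> ring

end dressedAlong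

lemma entryOp_mulVec_vacuum (ρ : ℂ) (Am : ℂ → Matrix (Fin d) (Fin d) A) (v : ℂ)
    (u : Fin m → ℂ) (k l z : Fin d) :
    (entryOp d m ρ Am v u k l).mulVec (fun p => if p = (fun _ : Fin m => z) then (1 : A) else 0) =
      fun p => dressedAlong (fun i => v - u i) (fun i => v + u i + ρ) (Am v) (List.finRange m)
        (k, p) (l, fun _ => z) := by
  have hξ : (fun p => if p = (fun _ : Fin m => z) then (1 : A) else 0) =
      Pi.single (fun _ => z) 1 := by
    ext p
    simp [Pi.single_apply]
  rw [hξ, mulVec_single_one]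
  rfl

def lambdaMinus (ρ v : ℂ) (u : Fin m → ℂ) : ℂ :=
  ∏ a : Fin m, ((v + u a - 1 + ρ) * (v - u a - 1)) / ((v + u a + ρ) * (v - u a))

lemma dressedAlong_finRange_apply_single (ρ v : ℂ) (u : Fin m → ℂ) (M : Matrix (Fin d) (Fin d) A)
    (hden : ∀ i : Fin m, v + u i + ρ ≠ 0 ∧ v + u i + ρ - 1 ≠ 0 ∧ v - u i ≠ 0 ∧ v - u i - 1 ≠ 0)
    (hden2 : 2 * v - 1 + ρ ≠ 0) {z i j : Fin d} (hi : i ≠ z) (hj : j ≠ z) :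
    dressedAlong (fun a => v - u a) (fun a => v + u a + ρ) M (List.finRange m)
        (i, fun _ => z) (j, fun _ => z) =
      (1 / lambdaMinus ρ v u) •
        (M i j + (if i = j then (1 - lambdaMinus ρ v u) / (2 * v - 1 + ρ) else 0) • M z z) := by
  have hprod : ((List.finRange m).map fun a =>
      (v - u a) / (v - u a - 1) * ((v + u a + ρ) / (v + u a + ρ - 1))).prod =
        1 / lambdaMinus ρ v u := by
    rw [← Fin.prod_univ_def, lambdaMinus, one_div, ← Finset.prod_inv_distrib]
    refine Finset.prod_congr rfl fun a _ => ?_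
    obtain ⟨h1, h2, h3, h4⟩ := hden a
    rw [show v + u a - 1 + ρ = v + u a + ρ - 1 by ring]
    field_simp
  have hΛ : lambdaMinus ρ v u ≠ 0 := Finset.prod_ne_zero_iff.mpr fun a _ => by
    obtain ⟨h1, h2, h3, h4⟩ := hden a
    exact div_ne_zero (mul_ne_zero (by convert h2 using 1; ring) h4) (mul_ne_zero h1 h3)
  rw [dressedAlong_apply_single _ _ _ (List.nodup_finRange m) (fun a _ => (hden a).2.2)
    (fun a _ => ⟨(hden a).1, (hden a).2.1⟩) (fun a _ => by ring) hden2 hi hj, hprod,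
    smul_add, smul_smul]
  congr 2
  split_ifs
  · field_simp
  · rw [mul_zero]

end YangDressing

open YangDressing in
theorem statement13 (d m : ℕ) (hd : 2 ≤ d)
    {A : Type*} [Ring A] [Algebra ℂ A]
    (ρ : ℂ) (u : Fin m → ℂ) (Am : ℂ → Matrix (Fin d) (Fin d) A) (v : ℂ)
    -- the first column of A(v) vanishes below the (1,1) entry
    (hA : ∀ i : Fin d, i ≠ ⟨0, by omega⟩ → Am v i ⟨0, by omega⟩ = 0)
    (hden : ∀ i : Fin m, v + u i + ρ ≠ 0 ∧ v + u i + ρ - 1 ≠ 0 ∧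
      v - u i ≠ 0 ∧ v - u i - 1 ≠ 0)
    (hden2 : 2*v - 1 + ρ ≠ 0) :
    -- [A_{ab}(v;u)]₁₁ ξ = [A(v)]₁₁ ξ
    ((entryOp d m ρ Am v u ⟨0, by omega⟩ ⟨0, by omega⟩).mulVec
        (fun p => if p = (fun _ => (⟨0, by omega⟩ : Fin d)) then (1 : A) else 0)
      = fun p =>
          Am v ⟨0, by omega⟩ ⟨0, by omega⟩ *
            (if p = (fun _ => (⟨0, by omega⟩ : Fin d)) then (1 : A) else 0))
    ∧
    -- [A_{ab}(v;u)]_{1+i,1} ξ = 0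
    (∀ i : Fin d, i ≠ ⟨0, by omega⟩ →
      (entryOp d m ρ Am v u i ⟨0, by omega⟩).mulVec
          (fun p => if p = (fun _ => (⟨0, by omega⟩ : Fin d)) then (1 : A) else 0)
        = 0)
    ∧
    -- [A_{ab}(v;u)]_{1+i,1+j} ξ = (1/Λ⁻)([A(v)]_{1+i,1+j} + δ_{ij}((1-Λ⁻)/(2v-1+ρ))[A(v)]₁₁) ξ
    (∀ i j : Fin d, i ≠ ⟨0, by omega⟩ → j ≠ ⟨0, by omega⟩ →
      (entryOp d m ρ Am v u i j).mulVec
          (fun p => if p = (fun _ => (⟨0, by omega⟩ : Fin d)) then (1 : A) else 0)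
        = fun p =>
            (1 / ∏ a : Fin m,
                ((v + u a - 1 + ρ) * (v - u a - 1)) / ((v + u a + ρ) * (v - u a))) •
              ((Am v i j +
                  (if i = j then
                    (1 - ∏ a : Fin m,
                        ((v + u a - 1 + ρ) * (v - u a - 1)) / ((v + u a + ρ) * (v - u a)))
                      / (2*v - 1 + ρ)
                  else 0) • Am v ⟨0, by omega⟩ ⟨0, by omega⟩) *
                (if p = (fun _ => (⟨0, by omega⟩ : Fin d)) then (1 : A) else 0))) := by
  set z : Fin d := ⟨0, by omega⟩
  have hvac (x : Fin d × (Fin m → Fin d)) (hx : x ≠ (z, fun _ => z)) :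
      dressedAlong (fun i => v - u i) (fun i => v + u i + ρ) (Am v) (List.finRange m)
        x (z, fun _ => z) = 0 :=
    dressedAlong_apply_eq_zero_of_excitations_lt _ _ _ _ hA (excitations_vacuum_lt hx)
  simp only [entryOp_mulVec_vacuum]
  refine ⟨funext fun p => ?_, fun i hi => funext fun p => hvac _ (by simp [hi]),
    fun i j hi hj => funext fun p => ?_⟩
  · by_cases hp : p = fun _ => z
    · subst hp
      rw [dressedAlong_apply_self _ _ _ (fun a _ => (hden a).2.2)
        (fun a _ => ⟨(hden a).1, (hden a).2.1⟩) fun a _ => by simp]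
      simp [onAW]
    · rw [hvac _ (by simp [hp]), if_neg hp, mul_zero]
  · by_cases hp : p = fun _ => z
    · subst hp
      rw [dressedAlong_finRange_apply_single ρ v u (Am v) hden hden2 hi hj, if_pos rfl, mul_one]
      rfl
    · rw [dressedAlong_apply_eq_zero_of_excitations_lt _ _ _ _ hA (excitations_single_lt hi hp),
        if_neg hp, mul_zero, smul_zero]
end
end

section
/- (Ř-symmetry of the generalised nested monodromy matrix.) Let m ≥ 2 and let A(v) be an n×n matrix with entries in 𝒜 ⊗ ℂ(v, w₁,…,w_m, u₁,…,u_m, ρ). On V_a ⊗ ⊗_{i=1}^m (V_{ã_i} ⊗ V_{a_i}), all factors copies of ℂⁿ, define S⁽¹⁾_a(v; w, u) = ( ∏_{i=1}^m r^t_{ã_i a}(u_i−v) ) ( ∏_{i=1}^m r^t_{a_i a}(w_i−v) ) A_a(v) ( ∏_{i=m}^{1} r^t_{a_i a}(w̃_i−v+ε) ) ( ∏_{i=m}^{1} r^t_{ã_i a}(ũ_i−v+ε) ), where r^t(w) = I − Q/w, ũ_i = κ−u_i−ρ, w̃_i = κ−w_i−ρ, and A_a acts as A(v) on V_a and as the identity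 elsewhere. Then: (i) Ř(u)(e₁ ⊗ e₁) = e₁ ⊗ e₁; (ii) for 1 ≤ i ≤ m−1, Ř_{ã_i ã_{i+1}}(u_{i+1}−u_i) S⁽¹⁾_a(v; w, u) = S⁽¹⁾_a(v; w, u_{i↔i+1}) Ř_{ã_i ã_{i+1}}(u_{i+1}−u_i), where u_{i↔i+1} denotes the tuple with u_i and u_{i+1} interchanged; and (iii) for 1 ≤ i ≤ m−1, Ř_{a_i a_{i+1}}(w_{i+1}−w_i) S⁽¹⁾_a(v; w, u) = S⁽¹⁾_a(v; w_{i↔i+1}, u) Ř_{a_i a_{i+1}}(w_{i+1}−w_i). -/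
open Matrix

noncomputable section

section Defs

variable (n m : ℕ) {A : Type*} [Ring A] [Algebra ℂ A]

/-- permutation operator `P` on `ℂⁿ ⊗ ℂⁿ` -/
def PnA : Matrix (Fin n × Fin n) (Fin n × Fin n) A :=
  Matrix.of fun p q => if p.1 = q.2 ∧ p.2 = q.1 then 1 else 0

/-- orthogonal-type `Q` on `ℂⁿ ⊗ ℂⁿ` -/
def QnA : Matrix (Fin n × Fin n) (Fin n × Fin n) A :=
  Matrix.of fun p q => if p.2 = p.1.rev ∧ q.2 = q.1.rev then 1 else 0

/-- the Yang R-matrix `R(u) = I - P/u` -/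
def RyA (u : ℂ) : Matrix (Fin n × Fin n) (Fin n × Fin n) A :=
  (1 : Matrix (Fin n × Fin n) (Fin n × Fin n) A) - u⁻¹ • PnA n

/-- its partial transpose in the first factor, `r^t(w) = I - Q/w` -/
def RtA (w : ℂ) : Matrix (Fin n × Fin n) (Fin n × Fin n) A :=
  (1 : Matrix (Fin n × Fin n) (Fin n × Fin n) A) - w⁻¹ • QnA n

/-- `Ř(w) = (w/(w-1)) P R(w)` -/
def RcheckA (w : ℂ) : Matrix (Fin n × Fin n) (Fin n × Fin n) A :=
  (w / (w - 1)) • (PnA n * RyA n w)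

/-- The index type of `V_a ⊗ ⊗_{i=1}^m (V_{ã_i} ⊗ V_{a_i})`: the first component is
the `V_a`-component, then the `V_{ã_i}`-components, then the `V_{a_i}`-components. -/
abbrev NIdx (n m : ℕ) := Fin n × (Fin m → Fin n) × (Fin m → Fin n)

/-- single-site operator acting on the factor `V_a` -/
def onA (M : Matrix (Fin n) (Fin n) A) : Matrix (NIdx n m) (NIdx n m) A :=
  Matrix.of fun p q => M p.1 q.1 * (if p.2 = q.2 then 1 else 0)

/-- two-site operator acting on the factors `(ã_i, a)` -/
def onTA (i : Fin m) (M : Matrix (Fin n × Fin n) (Fin n × Fin n) A) :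
    Matrix (NIdx n m) (NIdx n m) A :=
  Matrix.of fun p q =>
    M (p.2.1 i, p.1) (q.2.1 i, q.1) *
      (if p.2.2 = q.2.2 ∧ (∀ j, j ≠ i → p.2.1 j = q.2.1 j) then 1 else 0)

/-- two-site operator acting on the factors `(a_i, a)` -/
def onSA (i : Fin m) (M : Matrix (Fin n × Fin n) (Fin n × Fin n) A) :
    Matrix (NIdx n m) (NIdx n m) A :=
  Matrix.of fun p q =>
    M (p.2.2 i, p.1) (q.2.2 i, q.1) *
      (if p.2.1 = q.2.1 ∧ (∀ j, j ≠ i → p.2.2 j = q.2.2 j) then 1 else 0)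

/-- two-site operator acting on the factors `(ã_i, ã_{i'})` -/
def onTT (i i' : Fin m) (M : Matrix (Fin n × Fin n) (Fin n × Fin n) A) :
    Matrix (NIdx n m) (NIdx n m) A :=
  Matrix.of fun p q =>
    M (p.2.1 i, p.2.1 i') (q.2.1 i, q.2.1 i') *
      (if p.1 = q.1 ∧ p.2.2 = q.2.2 ∧ (∀ j, j ≠ i → j ≠ i' → p.2.1 j = q.2.1 j)
        then 1 else 0)

/-- two-site operator acting on the factors `(a_i, a_{i'})` -/
def onSS (i i' : Fin m) (M : Matrix (Fin n × Fin n) (Fin n × Fin n) A) :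
    Matrix (NIdx n m) (NIdx n m) A :=
  Matrix.of fun p q =>
    M (p.2.2 i, p.2.2 i') (q.2.2 i, q.2.2 i') *
      (if p.1 = q.1 ∧ p.2.1 = q.2.1 ∧ (∀ j, j ≠ i → j ≠ i' → p.2.2 j = q.2.2 j)
        then 1 else 0)

/-- the generalised nested monodromy matrix `S⁽¹⁾(v; w, u)` -/
def nestS (ε ρ : ℂ) (Am : ℂ → Matrix (Fin n) (Fin n) A) (v : ℂ) (w u : Fin m → ℂ) :
    Matrix (NIdx n m) (NIdx n m) A :=
  ((List.finRange m).map fun i => onTA n m i (RtA n (u i - v))).prod *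
  ((List.finRange m).map fun i => onSA n m i (RtA n (w i - v))).prod *
  onA n m (Am v) *
  ((List.finRange m).reverse.map fun i =>
    onSA n m i (RtA n ((kap n ε - w i - ρ) - v + ε))).prod *
  ((List.finRange m).reverse.map fun i =>
    onTA n m i (RtA n ((kap n ε - u i - ρ) - v + ε))).prod

end Defs


/-!
`Ř(t) = (t - 1)⁻¹ (t P - 1)` with `P` the flip of two tensor factors. On the sites `ã_i, ã_{i+1}`
the flip is the permutation matrix of the relabelling that exchanges them; it commutes with every
factor of `S⁽¹⁾` that does not act on these two sites and conjugates `Q_{ã_i a}` into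
`Q_{ã_{i+1} a}`. With the Brauer relation `Q_{ã_i a} Q_{ã_{i+1} a} = Q_{ã_i a} P` this gives the
local relation `Ř r^t_{ã_i a}(α) r^t_{ã_{i+1} a}(β) = r^t_{ã_i a}(β) r^t_{ã_{i+1} a}(α) Ř`, which
moves `Ř` through the adjacent factors `i, i+1` of both ordered products of `S⁽¹⁾`, exchanging
`u_i` and `u_{i+1}`. Part (iii) is part (ii) conjugated by the exchange of the sites `ã_j` and
`a_j`, and part (i) holds because `P` fixes `e₁ ⊗ e₁`.
-/

open Equiv

theorem Matrix.semiconjBy_permMatrix {ι α : Type*} [Fintype ι] [DecidableEq ι]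
    [NonAssocSemiring α] (σ : Perm ι) (Y : Matrix ι ι α) :
    SemiconjBy (σ.permMatrix α) Y (Y.submatrix σ σ) := by
  rw [SemiconjBy, PEquiv.toMatrix_toPEquiv_mul, PEquiv.mul_toMatrix_toPEquiv,
    submatrix_submatrix, Function.comp_id, Equiv.self_comp_symm]

theorem semiconjBy_of_brauer_relations {R : Type*} [Ring R] [Algebra ℂ R] {P Q₁ Q₂ : R}
    (h₁ : P * Q₁ = Q₂ * P) (h₂ : P * Q₂ = Q₁ * P) (h₁₂ : Q₁ * Q₂ * P = Q₁)
    (h₂₁ : Q₂ * Q₁ * P = Q₂) {α β : ℂ} (hα : α ≠ 0) (hβ : β ≠ 0) :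
    SemiconjBy ((β - α) • P - 1) ((1 - α⁻¹ • Q₁) * (1 - β⁻¹ • Q₂))
      ((1 - β⁻¹ • Q₁) * (1 - α⁻¹ • Q₂)) := by
  have hP : P * (Q₁ * Q₂) = Q₂ := by rw [← mul_assoc, h₁, mul_assoc, h₂, ← mul_assoc, h₂₁]
  simp only [SemiconjBy, sub_mul, mul_sub, mul_one, one_mul, smul_mul_assoc, mul_smul_comm,
    h₁, h₂, hP, h₁₂]
  -- what remains is `(β - α) / (α β) = α⁻¹ - β⁻¹`
  match_scalars <;> field_simp <;> ring

theorem List.pair_infix_finRange {m : ℕ} {i i' : Fin m} (h : (i : ℕ) + 1 = i') :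
    [i, i'] <:+: List.finRange m := by
  rw [List.infix_iff_getElem?]
  refine ⟨i, by simp; omega, fun k hk => ?_⟩
  simp only [List.length_cons, List.length_nil] at hk
  have hk' : k + i < (List.finRange m).length := by simp; omega
  rw [List.getElem?_eq_getElem hk', List.getElem_finRange, Option.some_inj]
  interval_cases k <;> simp [Fin.ext_iff]; omega

theorem SemiconjBy.list_prod_map_of_infix {M ι : Type*} [Monoid M] {R : M} {g g' : ι → M}
    {l : List ι} {a b : ι} (hl : l.Nodup) (hab : [a, b] <:+: l)
    (hg : ∀ k, k ≠ a → k ≠ b → g' k = g k) (hR : ∀ k, k ≠ a → k ≠ b → Commute R (g k))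
    (hpair : SemiconjBy R (g a * g b) (g' a * g' b)) :
    SemiconjBy R (l.map g).prod (l.map g').prod := by
  obtain ⟨l₁, l₂, rfl⟩ := hab
  simp only [List.nodup_append, List.mem_append, List.mem_cons] at hl
  have outside : ∀ l' : List ι, (∀ k ∈ l', k ≠ a ∧ k ≠ b) →
      SemiconjBy R (l'.map g).prod (l'.map g').prod := fun l' hl' => by
    rw [List.map_congr_left fun k hk => hg k (hl' k hk).1 (hl' k hk).2]
    refine Commute.list_prod_right _ _ fun x hx => ?_
    obtain ⟨k, hk, rfl⟩ := List.mem_map.mp hx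
    exact hR k (hl' k hk).1 (hl' k hk).2
  have h₁ := outside l₁ fun k hk => ⟨hl.1.2.2 k hk a (by simp), hl.1.2.2 k hk b (by simp)⟩
  have h₂ := outside l₂ fun k hk =>
    ⟨(hl.2.2 a (by simp) k hk).symm, (hl.2.2 b (by simp) k hk).symm⟩
  simpa [List.prod_append, mul_assoc] using (h₁.mul_right hpair).mul_right h₂

section TwoSites

variable {n : ℕ} {A : Type*} [Ring A]

theorem PnA_eq_permMatrix :
    (PnA n : Matrix (Fin n × Fin n) (Fin n × Fin n) A) =
      Perm.permMatrix A (prodComm (Fin n) (Fin n)) := by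
  ext p q
  simp only [PnA, of_apply, PEquiv.toMatrix_apply, toPEquiv_apply, Option.mem_def,
    Option.some.injEq, prodComm_apply, Prod.ext_iff, Prod.fst_swap, Prod.snd_swap]
  exact if_congr ⟨fun h => ⟨h.2, h.1⟩, fun h => ⟨h.2, h.1⟩⟩ rfl rfl

theorem PnA_mul_self : (PnA n : Matrix (Fin n × Fin n) (Fin n × Fin n) A) * PnA n = 1 := by
  rw [PnA_eq_permMatrix, ← permMatrix_mul]
  convert permMatrix_one
  ext <;> rfl

theorem RcheckA_eq [Algebra ℂ A] {t : ℂ} (ht : t ≠ 0) :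
    (RcheckA n t : Matrix (Fin n × Fin n) (Fin n × Fin n) A) = (t - 1)⁻¹ • (t • PnA n - 1) := by
  rw [RcheckA, RyA, mul_sub, mul_one, mul_smul_comm, PnA_mul_self]
  match_scalars <;> field_simp

theorem RcheckA_mulVec_single {x : ℂ} (hx : x ≠ 0) (hx₁ : x - 1 ≠ 0) (z : Fin n) :
    (RcheckA n x : Matrix (Fin n × Fin n) (Fin n × Fin n) ℂ) *ᵥ Pi.single (z, z) 1 =
      Pi.single (z, z) 1 := by
  have hP : (PnA n : Matrix (Fin n × Fin n) (Fin n × Fin n) ℂ) *ᵥ Pi.single (z, z) 1 =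
      Pi.single (z, z) 1 := by
    rw [PnA_eq_permMatrix, PEquiv.toMatrix_toPEquiv_mulVec]
    ext p
    simp [Pi.single_apply, Prod.ext_iff, and_comm]
  rw [RcheckA_eq hx, smul_mulVec, sub_mulVec, smul_mulVec, hP, one_mulVec]
  match_scalars
  field_simp

end TwoSites

section Sites

variable {n m : ℕ} {A : Type*} [Ring A]

theorem onTA_one (k : Fin m) :
    onTA n m k (1 : Matrix (Fin n × Fin n) (Fin n × Fin n) A) = 1 := by
  ext p q
  simp only [onTA, of_apply, one_apply, ite_zero_mul_ite_zero, mul_one]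
  refine if_congr ⟨fun ⟨h, hs, ht⟩ => ?_, ?_⟩ rfl rfl
  · simp only [Prod.mk.injEq] at h
    refine Prod.ext h.2 (Prod.ext (funext fun j => ?_) hs)
    by_cases hj : j = k
    · exact hj ▸ h.1
    · exact ht j hj
  · rintro rfl
    simp

theorem onTA_sub (k : Fin m) (M N : Matrix (Fin n × Fin n) (Fin n × Fin n) A) :
    onTA n m k (M - N) = onTA n m k M - onTA n m k N := by
  ext; simp only [onTA, of_apply, Matrix.sub_apply, sub_mul]

theorem onTA_smul [Algebra ℂ A] (k : Fin m) (c : ℂ)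
    (M : Matrix (Fin n × Fin n) (Fin n × Fin n) A) :
    onTA n m k (c • M) = c • onTA n m k M := by
  ext; simp only [onTA, of_apply, Matrix.smul_apply, smul_mul_assoc]

theorem onTA_RtA [Algebra ℂ A] (k : Fin m) (w : ℂ) :
    onTA n m k (RtA n w : Matrix (Fin n × Fin n) (Fin n × Fin n) A) =
      1 - w⁻¹ • onTA n m k (QnA n) := by
  rw [RtA, onTA_sub, onTA_smul, onTA_one]

theorem onTT_one (i i' : Fin m) :
    onTT n m i i' (1 : Matrix (Fin n × Fin n) (Fin n × Fin n) A) = 1 := by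
  ext p q
  simp only [onTT, of_apply, one_apply, ite_zero_mul_ite_zero, mul_one]
  refine if_congr ⟨fun ⟨h, ha, hs, ht⟩ => ?_, ?_⟩ rfl rfl
  · simp only [Prod.mk.injEq] at h
    refine Prod.ext ha (Prod.ext (funext fun j => ?_) hs)
    by_cases hj : j = i
    · exact hj ▸ h.1
    by_cases hj' : j = i'
    · exact hj' ▸ h.2
    exact ht j hj hj'
  · rintro rfl
    simp

theorem onTT_sub (i i' : Fin m) (M N : Matrix (Fin n × Fin n) (Fin n × Fin n) A) :
    onTT n m i i' (M - N) = onTT n m i i' M - onTT n m i i' N := by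
  ext; simp only [onTT, of_apply, Matrix.sub_apply, sub_mul]

theorem onTT_smul [Algebra ℂ A] (i i' : Fin m) (c : ℂ)
    (M : Matrix (Fin n × Fin n) (Fin n × Fin n) A) :
    onTT n m i i' (c • M) = c • onTT n m i i' M := by
  ext; simp only [onTT, of_apply, Matrix.smul_apply, smul_mul_assoc]

variable (n) in
def tildePerm (τ : Perm (Fin m)) : Perm (NIdx n m) where
  toFun p := (p.1, p.2.1 ∘ τ, p.2.2)
  invFun p := (p.1, p.2.1 ∘ τ.symm, p.2.2)
  left_inv p := by simp [Function.comp_assoc]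
  right_inv p := by simp [Function.comp_assoc]

@[simp]
theorem tildePerm_apply (τ : Perm (Fin m)) (p : NIdx n m) :
    tildePerm n τ p = (p.1, p.2.1 ∘ τ, p.2.2) := rfl

@[simp]
theorem tildePerm_symm_apply (τ : Perm (Fin m)) (p : NIdx n m) :
    (tildePerm n τ).symm p = (p.1, p.2.1 ∘ τ.symm, p.2.2) := rfl

theorem permMatrix_tildePerm_swap_mul_self (i i' : Fin m) :
    Perm.permMatrix A (tildePerm n (swap i i')) * Perm.permMatrix A (tildePerm n (swap i i')) =
      1 := by
  rw [← permMatrix_mul]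
  convert permMatrix_one
  ext p <;> simp [Function.comp_def]

theorem onTT_PnA (i i' : Fin m) :
    onTT n m i i' (PnA n : Matrix (Fin n × Fin n) (Fin n × Fin n) A) =
      Perm.permMatrix A (tildePerm n (swap i i')) := by
  ext p q
  simp only [onTT, PnA, of_apply, ite_zero_mul_ite_zero, mul_one, PEquiv.toMatrix_apply,
    toPEquiv_apply, Option.mem_def, Option.some.injEq, tildePerm_apply]
  refine if_congr ⟨fun ⟨⟨hi, hi'⟩, ha, hs, ht⟩ => ?_, ?_⟩ rfl rfl
  · refine Prod.ext ha (Prod.ext (funext fun j => ?_) hs)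
    simp only [Function.comp_apply]
    rcases eq_or_ne j i with rfl | hj
    · simpa using hi'
    rcases eq_or_ne j i' with rfl | hj'
    · simpa using hi
    rw [swap_apply_of_ne_of_ne hj hj', ht j hj hj']
  · rintro rfl
    simpa using fun j hj hj' => by rw [swap_apply_of_ne_of_ne hj hj']

theorem onTT_RcheckA [Algebra ℂ A] (i i' : Fin m) {t : ℂ} (ht : t ≠ 0) :
    onTT n m i i' (RcheckA n t : Matrix (Fin n × Fin n) (Fin n × Fin n) A) =
      (t - 1)⁻¹ • (t • Perm.permMatrix A (tildePerm n (swap i i')) - 1) := by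
  rw [RcheckA_eq ht, onTT_smul, onTT_sub, onTT_smul, onTT_PnA, onTT_one]

theorem onTA_submatrix_tildePerm (τ : Perm (Fin m)) (k : Fin m)
    (M : Matrix (Fin n × Fin n) (Fin n × Fin n) A) :
    (onTA n m k M).submatrix (tildePerm n τ) (tildePerm n τ) = onTA n m (τ k) M := by
  ext p q
  simp only [submatrix_apply, tildePerm_apply, onTA, of_apply, Function.comp_apply]
  refine congrArg _ (if_congr (and_congr_right fun _ => τ.forall_congr fun j => ?_) rfl rfl)
  rw [τ.injective.ne_iff]

theorem onSA_submatrix_tildePerm (τ : Perm (Fin m)) (k : Fin m)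
    (M : Matrix (Fin n × Fin n) (Fin n × Fin n) A) :
    (onSA n m k M).submatrix (tildePerm n τ) (tildePerm n τ) = onSA n m k M := by
  ext p q
  simp only [submatrix_apply, tildePerm_apply, onSA, of_apply,
    τ.surjective.injective_comp_right.eq_iff]

theorem onA_submatrix_tildePerm (τ : Perm (Fin m)) (M : Matrix (Fin n) (Fin n) A) :
    (onA n m M).submatrix (tildePerm n τ) (tildePerm n τ) = onA n m M := by
  ext p q
  simp only [submatrix_apply, tildePerm_apply, onA, of_apply, Prod.ext_iff,
    τ.surjective.injective_comp_right.eq_iff]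

theorem onTA_QnA_mul_onTA_QnA {i i' : Fin m} (h : i ≠ i') :
    onTA n m i (QnA n : Matrix (Fin n × Fin n) (Fin n × Fin n) A) * onTA n m i' (QnA n) =
      onTA n m i (QnA n) * Perm.permMatrix A (tildePerm n (swap i i')) := by
  ext p q
  rw [PEquiv.mul_toMatrix_toPEquiv, submatrix_apply, mul_apply,
    Fintype.sum_eq_single ((q.2.1 i).rev, Function.update p.2.1 i (q.2.1 i), p.2.2)]
  · simp only [onTA, QnA, of_apply, ite_zero_mul_ite_zero, mul_one, id, tildePerm_symm_apply,
      Function.comp_apply, symm_swap, swap_apply_left, Function.update_self,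
      Function.update_of_ne h.symm]
    refine if_congr ?_ rfl rfl
    simp only [Fin.rev_inj, and_true, true_and]
    constructor
    · rintro ⟨⟨ha, -⟩, ⟨hq, hqa⟩, hs, ht⟩
      refine ⟨⟨ha, hqa⟩, hs, fun j hj => ?_⟩
      rcases eq_or_ne j i' with rfl | hj'
      · rw [swap_apply_right, hq]
      · rw [swap_apply_of_ne_of_ne hj hj', ← ht j hj', Function.update_of_ne hj]
    · rintro ⟨⟨ha, hqa⟩, hs, ht⟩
      have hq : q.2.1 i = p.2.1 i' := by simpa using (ht i' h.symm).symm
      refine ⟨⟨ha, fun j hj => (Function.update_of_ne hj _ _).symm⟩, ⟨hq, hqa⟩, hs, fun j hj' => ?_⟩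
      rcases eq_or_ne j i with rfl | hj
      · rw [Function.update_self]
      · rw [Function.update_of_ne hj, ht j hj, swap_apply_of_ne_of_ne hj hj']
  · intro r hr
    simp only [onTA, QnA, of_apply, ite_zero_mul_ite_zero, mul_one]
    refine if_neg fun ⟨⟨⟨_, hr₁⟩, hs, ht⟩, _, _, ht'⟩ => hr (Prod.ext ?_ (Prod.ext ?_ hs.symm))
    · rw [hr₁, ht' i h]
    · funext j
      change r.2.1 j = Function.update p.2.1 i (q.2.1 i) j
      by_cases hj : j = i
      · rw [hj, Function.update_self, ht' i h]
      · rw [Function.update_of_ne hj, ht j hj]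

-- conjugation by this exchange turns statements about the sites `ã_j` into ones about the `a_j`
variable (n m) in
def exchangeSites : NIdx n m ≃ NIdx n m :=
  prodCongr (Equiv.refl _) (prodComm _ _)

variable (A) in
def exchangeSitesRingEquiv :
    Matrix (NIdx n m) (NIdx n m) A ≃+* Matrix (NIdx n m) (NIdx n m) A :=
  reindexRingEquiv A (exchangeSites n m)

@[simp]
theorem exchangeSitesRingEquiv_onTA (k : Fin m) (M : Matrix (Fin n × Fin n) (Fin n × Fin n) A) :
    exchangeSitesRingEquiv A (onTA n m k M) = onSA n m k M := by
  ext; rfl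

@[simp]
theorem exchangeSitesRingEquiv_onSA (k : Fin m) (M : Matrix (Fin n × Fin n) (Fin n × Fin n) A) :
    exchangeSitesRingEquiv A (onSA n m k M) = onTA n m k M := by
  ext; rfl

@[simp]
theorem exchangeSitesRingEquiv_onSS (i i' : Fin m)
    (M : Matrix (Fin n × Fin n) (Fin n × Fin n) A) :
    exchangeSitesRingEquiv A (onSS n m i i' M) = onTT n m i i' M := by
  ext; rfl

@[simp]
theorem exchangeSitesRingEquiv_onA (M : Matrix (Fin n) (Fin n) A) :
    exchangeSitesRingEquiv A (onA n m M) = onA n m M := by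
  ext p q
  simp [exchangeSitesRingEquiv, onA, exchangeSites, Prod.ext_iff, and_comm]

end Sites

section Monodromy

variable {n m : ℕ} {A : Type*} [Ring A] [Algebra ℂ A]

theorem commute_smul_permMatrix_sub_one {ι : Type*} [Fintype ι] [DecidableEq ι] {σ : Perm ι}
    {Y : Matrix ι ι A} (hY : Y.submatrix σ σ = Y) (c : ℂ) :
    Commute (c • Perm.permMatrix A σ - 1) Y := by
  have hσ : SemiconjBy (Perm.permMatrix A σ) Y Y := by
    simpa only [hY] using semiconjBy_permMatrix σ Y
  exact (hσ.smul_left c).sub_left (Commute.one_left Y)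

theorem semiconjBy_onTA_RtA_mul_onTA_RtA {i i' : Fin m} (h : i ≠ i') {α β : ℂ} (hα : α ≠ 0)
    (hβ : β ≠ 0) :
    SemiconjBy ((β - α) • Perm.permMatrix A (tildePerm n (swap i i')) - 1)
      (onTA n m i (RtA n α) * onTA n m i' (RtA n β))
      (onTA n m i (RtA n β) * onTA n m i' (RtA n α)) := by
  have hP : ∀ k (M : Matrix (Fin n × Fin n) (Fin n × Fin n) A),
      SemiconjBy (Perm.permMatrix A (tildePerm n (swap i i'))) (onTA n m k M)
        (onTA n m (swap i i' k) M) :=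
    fun k M => onTA_submatrix_tildePerm _ k M ▸ semiconjBy_permMatrix _ _
  simp only [onTA_RtA]
  refine semiconjBy_of_brauer_relations ?_ ?_ ?_ ?_ hα hβ
  · simpa using (hP i (QnA n)).eq
  · simpa using (hP i' (QnA n)).eq
  · rw [onTA_QnA_mul_onTA_QnA h, mul_assoc, permMatrix_tildePerm_swap_mul_self, mul_one]
  · rw [onTA_QnA_mul_onTA_QnA h.symm, Equiv.swap_comm, mul_assoc,
      permMatrix_tildePerm_swap_mul_self, mul_one]

variable (n m) in
def rtProd (emb : Fin m → Matrix (Fin n × Fin n) (Fin n × Fin n) A → Matrix (NIdx n m) (NIdx n m) A)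
    (l : List (Fin m)) (f : Fin m → ℂ) : Matrix (NIdx n m) (NIdx n m) A :=
  (l.map fun k => emb k (RtA n (f k))).prod

theorem nestS_eq (ε ρ : ℂ) (Am : ℂ → Matrix (Fin n) (Fin n) A) (v : ℂ) (w u : Fin m → ℂ) :
    nestS n m ε ρ Am v w u =
      rtProd n m (onTA n m) (List.finRange m) (fun k => u k - v) *
      rtProd n m (onSA n m) (List.finRange m) (fun k => w k - v) * onA n m (Am v) *
      rtProd n m (onSA n m) (List.finRange m).reverse (fun k => kap n ε - w k - ρ - v + ε) *
      rtProd n m (onTA n m) (List.finRange m).reverse (fun k => kap n ε - u k - ρ - v + ε) :=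
  rfl

@[simp]
theorem exchangeSitesRingEquiv_rtProd_onTA (l : List (Fin m)) (f : Fin m → ℂ) :
    exchangeSitesRingEquiv A (rtProd n m (onTA n m) l f) = rtProd n m (onSA n m) l f := by
  simp [rtProd, map_list_prod, Function.comp_def]

@[simp]
theorem exchangeSitesRingEquiv_rtProd_onSA (l : List (Fin m)) (f : Fin m → ℂ) :
    exchangeSitesRingEquiv A (rtProd n m (onSA n m) l f) = rtProd n m (onTA n m) l f := by
  simp [rtProd, map_list_prod, Function.comp_def]

theorem commute_rtProd_onSA (τ : Perm (Fin m)) (c : ℂ) (l : List (Fin m)) (f : Fin m → ℂ) :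
    Commute (c • Perm.permMatrix A (tildePerm n τ) - 1) (rtProd n m (onSA n m) l f) :=
  Commute.list_prod_right _ _ fun _ hx => by
    obtain ⟨k, -, rfl⟩ := List.mem_map.mp hx
    exact commute_smul_permMatrix_sub_one (onSA_submatrix_tildePerm τ k _) c

theorem semiconjBy_rtProd_onTA {l : List (Fin m)} {a b : Fin m} (hl : l.Nodup)
    (hab : [a, b] <:+: l) {f : Fin m → ℂ} (ha : f a ≠ 0) (hb : f b ≠ 0) :
    SemiconjBy ((f b - f a) • Perm.permMatrix A (tildePerm n (swap a b)) - 1)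
      (rtProd n m (onTA n m) l f) (rtProd n m (onTA n m) l (f ∘ swap a b)) := by
  have hne : a ≠ b := by simpa using hl.sublist hab.sublist
  refine SemiconjBy.list_prod_map_of_infix hl hab (fun k hk hk' => ?_) (fun k hk hk' => ?_) ?_
  · simp [swap_apply_of_ne_of_ne hk hk']
  · refine commute_smul_permMatrix_sub_one ?_ _
    rw [onTA_submatrix_tildePerm, swap_apply_of_ne_of_ne hk hk']
  · simpa using semiconjBy_onTA_RtA_mul_onTA_RtA hne ha hb

theorem semiconjBy_rtProd_onTA_finRange {i i' : Fin m} (hii' : (i : ℕ) + 1 = i') {v : ℂ}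
    {x : Fin m → ℂ} (h : x i - v ≠ 0) (h' : x i' - v ≠ 0) :
    SemiconjBy ((x i' - x i) • Perm.permMatrix A (tildePerm n (swap i i')) - 1)
      (rtProd n m (onTA n m) (List.finRange m) fun k => x k - v)
      (rtProd n m (onTA n m) (List.finRange m) fun k => (x ∘ swap i i') k - v) := by
  have := semiconjBy_rtProd_onTA (n := n) (A := A) (List.nodup_finRange m)
    (List.pair_infix_finRange hii') (f := fun k => x k - v) h h'
  rwa [sub_sub_sub_cancel_right] at this

theorem semiconjBy_rtProd_onTA_finRange_reverse {i i' : Fin m} (hii' : (i : ℕ) + 1 = i')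
    {ε ρ v : ℂ} {x : Fin m → ℂ} (h : kap n ε - x i - ρ - v + ε ≠ 0)
    (h' : kap n ε - x i' - ρ - v + ε ≠ 0) :
    SemiconjBy ((x i' - x i) • Perm.permMatrix A (tildePerm n (swap i i')) - 1)
      (rtProd n m (onTA n m) (List.finRange m).reverse fun k => kap n ε - x k - ρ - v + ε)
      (rtProd n m (onTA n m) (List.finRange m).reverse
        fun k => kap n ε - (x ∘ swap i i') k - ρ - v + ε) := by
  have := semiconjBy_rtProd_onTA (n := n) (A := A)
    (List.nodup_reverse.mpr (List.nodup_finRange m)) (List.pair_infix_finRange hii').reverse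
    (f := fun k => kap n ε - x k - ρ - v + ε) h' h
  rw [Equiv.swap_comm] at this
  convert this using 3
  · ring
  · rfl

theorem onTT_RcheckA_mul_nestS {i i' : Fin m} (hii' : (i : ℕ) + 1 = i') (ε ρ : ℂ)
    (Am : ℂ → Matrix (Fin n) (Fin n) A) (v : ℂ) (w u : Fin m → ℂ)
    (h : u i - v ≠ 0) (h' : u i' - v ≠ 0) (hb : kap n ε - u i - ρ - v + ε ≠ 0)
    (hb' : kap n ε - u i' - ρ - v + ε ≠ 0) (ht : u i' - u i ≠ 0) :
    onTT n m i i' (RcheckA n (u i' - u i)) * nestS n m ε ρ Am v w u =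
      nestS n m ε ρ Am v w (u ∘ swap i i') * onTT n m i i' (RcheckA n (u i' - u i)) := by
  rw [onTT_RcheckA _ _ ht, nestS_eq, nestS_eq]
  refine SemiconjBy.smul_left ?_ _
  exact ((((semiconjBy_rtProd_onTA_finRange hii' h h').mul_right
    (commute_rtProd_onSA _ _ _ _).semiconjBy).mul_right
    (commute_smul_permMatrix_sub_one (onA_submatrix_tildePerm _ _) _).semiconjBy).mul_right
    (commute_rtProd_onSA _ _ _ _).semiconjBy).mul_right
    (semiconjBy_rtProd_onTA_finRange_reverse hii' hb hb')

theorem onSS_RcheckA_mul_nestS {i i' : Fin m} (hii' : (i : ℕ) + 1 = i') (ε ρ : ℂ)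
    (Am : ℂ → Matrix (Fin n) (Fin n) A) (v : ℂ) (w u : Fin m → ℂ)
    (h : w i - v ≠ 0) (h' : w i' - v ≠ 0) (hb : kap n ε - w i - ρ - v + ε ≠ 0)
    (hb' : kap n ε - w i' - ρ - v + ε ≠ 0) (ht : w i' - w i ≠ 0) :
    onSS n m i i' (RcheckA n (w i' - w i)) * nestS n m ε ρ Am v w u =
      nestS n m ε ρ Am v (w ∘ swap i i') u * onSS n m i i' (RcheckA n (w i' - w i)) := by
  apply (exchangeSitesRingEquiv A).injective
  simp only [nestS_eq, map_mul, exchangeSitesRingEquiv_onSS, exchangeSitesRingEquiv_onA,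
    exchangeSitesRingEquiv_rtProd_onTA, exchangeSitesRingEquiv_rtProd_onSA]
  rw [onTT_RcheckA _ _ ht]
  refine SemiconjBy.smul_left ?_ _
  exact ((((commute_rtProd_onSA _ _ _ _).semiconjBy.mul_right
    (semiconjBy_rtProd_onTA_finRange hii' h h')).mul_right
    (commute_smul_permMatrix_sub_one (onA_submatrix_tildePerm _ _) _).semiconjBy).mul_right
    (semiconjBy_rtProd_onTA_finRange_reverse hii' hb hb')).mul_right
    (commute_rtProd_onSA _ _ _ _).semiconjBy

end Monodromy
theorem statement15 (n m : ℕ) (hn : 1 ≤ n) (ε ρ : ℂ)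
    {A : Type*} [Ring A] [Algebra ℂ A]
    (Am : ℂ → Matrix (Fin n) (Fin n) A) (v : ℂ) (w u : Fin m → ℂ)
    (hden : ∀ i : Fin m, u i - v ≠ 0 ∧ w i - v ≠ 0 ∧
      (kap n ε - w i - ρ) - v + ε ≠ 0 ∧ (kap n ε - u i - ρ) - v + ε ≠ 0) :
    -- (i)  Ř(x) (e₁ ⊗ e₁) = e₁ ⊗ e₁
    (∀ x : ℂ, x ≠ 0 → x - 1 ≠ 0 →
      (RcheckA n (A := ℂ) x).mulVec
          (fun p : Fin n × Fin n =>
            if p = ((⟨0, by omega⟩ : Fin n), (⟨0, by omega⟩ : Fin n)) then 1 else 0)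
        = fun p : Fin n × Fin n =>
            if p = ((⟨0, by omega⟩ : Fin n), (⟨0, by omega⟩ : Fin n)) then 1 else 0)
    ∧
    -- (ii)  Ř-symmetry in the ã-spaces
    (∀ i : Fin m, ∀ hi : (i : ℕ) + 1 < m,
      u ⟨i + 1, hi⟩ - u i ≠ 0 → u ⟨i + 1, hi⟩ - u i ≠ 1 →
      onTT n m i ⟨i + 1, hi⟩ (RcheckA n (u ⟨i + 1, hi⟩ - u i)) * nestS n m ε ρ Am v w u
        = nestS n m ε ρ Am v w
            (Function.update (Function.update u i (u ⟨i + 1, hi⟩)) ⟨i + 1, hi⟩ (u i)) *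
          onTT n m i ⟨i + 1, hi⟩ (RcheckA n (u ⟨i + 1, hi⟩ - u i)))
    ∧
    -- (iii)  Ř-symmetry in the a-spaces
    (∀ i : Fin m, ∀ hi : (i : ℕ) + 1 < m,
      w ⟨i + 1, hi⟩ - w i ≠ 0 → w ⟨i + 1, hi⟩ - w i ≠ 1 →
      onSS n m i ⟨i + 1, hi⟩ (RcheckA n (w ⟨i + 1, hi⟩ - w i)) * nestS n m ε ρ Am v w u
        = nestS n m ε ρ Am v
            (Function.update (Function.update w i (w ⟨i + 1, hi⟩)) ⟨i + 1, hi⟩ (w i)) u *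
          onSS n m i ⟨i + 1, hi⟩ (RcheckA n (w ⟨i + 1, hi⟩ - w i))) := by
  refine ⟨fun x hx hx₁ => ?_, fun i hi ht _ => ?_, fun i hi ht _ => ?_⟩
  · convert RcheckA_mulVec_single hx hx₁ (⟨0, by omega⟩ : Fin n) using 2 <;>
      simp [funext_iff, Pi.single_apply]
  · rw [← comp_swap_eq_update, Equiv.swap_comm]
    exact onTT_RcheckA_mul_nestS rfl ε ρ Am v w u (hden i).1 (hden _).1 (hden i).2.2.2
      (hden _).2.2.2 ht
  · rw [← comp_swap_eq_update, Equiv.swap_comm]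
    exact onSS_RcheckA_mul_nestS rfl ε ρ Am v w u (hden i).2.1 (hden _).2.1 (hden i).2.2.1
      (hden _).2.2.1 ht
end
end
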